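/- arXiv:1907.11987 — 7 statements merged into one kernel-verified Lean document; each statement's English description precedes it below -/
import Mathlib

section
/- Let ω : 𝔻 → 𝔻 be analytic with ω(0) = 0 and ω'(0) = a ∈ (0,1]. Then for all z ∈ 𝔻, |ω(z) - z| ≤ (1 - a) · |z|(1 + |z|) / (1 - a|z|). -/
/-! The slope `g = dslope ω 0`, i.e. `ω z / z`, maps the disc into the closed disc and has
`g 0 = a` (Schwarz). Composing `g` with the disc automorphism `w ↦ (w - a) / (1 - a w)` and
applying Schwarz once more gives the Schwarz–Pick inequality `|g z - a| ≤ |z| |1 - a g z|`.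
Two triangle inequalities turn this into `|g z - 1| ≤ (1 - a)(1 + |z|) / (1 - a|z|)`, and
`ω z - z = z (g z - 1)`. -/

open Metric Set ComplexConjugate

namespace Complex

theorem normSq_one_sub_conj_mul_sub_normSq_sub (c w : ℂ) :
    normSq (1 - conj c * w) - normSq (w - c) = (1 - normSq c) * (1 - normSq w) := by
  simp only [normSq_apply, sub_re, sub_im, mul_re, mul_im, conj_re, conj_im, one_re, one_im]
  ring

theorem norm_sub_le_norm_one_sub_conj_mul {c w : ℂ} (hc : ‖c‖ ≤ 1) (hw : ‖w‖ ≤ 1) :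
    ‖w - c‖ ≤ ‖1 - conj c * w‖ := by
  have hc' : normSq c ≤ 1 := by rw [normSq_eq_norm_sq]; nlinarith [norm_nonneg c]
  have hw' : normSq w ≤ 1 := by rw [normSq_eq_norm_sq]; nlinarith [norm_nonneg w]
  have key := normSq_one_sub_conj_mul_sub_normSq_sub c w
  rw [← sq_le_sq₀ (norm_nonneg _) (norm_nonneg _), ← normSq_eq_norm_sq, ← normSq_eq_norm_sq]
  nlinarith [mul_nonneg (sub_nonneg.2 hc') (sub_nonneg.2 hw')]

theorem one_sub_conj_mul_ne_zero {c w : ℂ} (hc : ‖c‖ < 1) (hw : ‖w‖ ≤ 1) :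
    1 - conj c * w ≠ 0 := by
  refine sub_ne_zero.2 (ne_of_apply_ne norm ?_)
  rw [norm_one, norm_mul, norm_conj]
  exact (mul_lt_one_of_nonneg_of_lt_one_left (norm_nonneg c) hc hw).ne'

theorem norm_sub_le_mul_norm_one_sub_conj_mul_of_mapsTo_ball {f : ℂ → ℂ}
    (hd : DifferentiableOn ℂ f (ball 0 1)) (hf : MapsTo f (ball 0 1) (closedBall 0 1))
    {z : ℂ} (hz : z ∈ ball 0 1) :
    ‖f z - f 0‖ ≤ ‖z‖ * ‖1 - conj (f 0) * f z‖ := by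
  have h0 : (0 : ℂ) ∈ ball (0 : ℂ) 1 := mem_ball_self one_pos
  have hnorm : ∀ w ∈ ball (0 : ℂ) 1, ‖f w‖ ≤ 1 := fun w hw => mem_closedBall_zero_iff.1 (hf hw)
  rcases (hnorm 0 h0).lt_or_eq with hc | hc
  · set c := f 0
    set φ : ℂ → ℂ := fun w => (f w - c) / (1 - conj c * f w)
    have hden : ∀ w ∈ ball (0 : ℂ) 1, 1 - conj c * f w ≠ 0 := fun w hw =>
      one_sub_conj_mul_ne_zero hc (hnorm w hw)
    have hφd : DifferentiableOn ℂ φ (ball 0 1) :=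
      (hd.sub_const c).div ((differentiableOn_const 1).sub (hd.const_mul _)) hden
    have hφmaps : MapsTo φ (ball 0 1) (closedBall 0 1) := fun w hw => by
      rw [mem_closedBall_zero_iff, norm_div, div_le_one (norm_pos_iff.2 (hden w hw))]
      exact norm_sub_le_norm_one_sub_conj_mul hc.le (hnorm w hw)
    have hφz : ‖φ z‖ ≤ ‖z‖ :=
      norm_le_norm_of_mapsTo_ball hφd hφmaps (by simp [φ, c]) (mem_ball_zero_iff.1 hz)
    rwa [norm_div, div_le_iff₀ (norm_pos_iff.2 (hden z hz))] at hφz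
  · -- maximum modulus: `‖f‖` peaks at the centre, so `f` is constant
    have hmax : IsMaxOn (norm ∘ f) (ball 0 1) 0 := fun w hw => by
      simpa [hc] using hnorm w hw
    have hconst := eqOn_of_isPreconnected_of_isMaxOn_norm (convex_ball (0 : ℂ) 1).isPreconnected
      isOpen_ball hd h0 hmax hz
    rw [show f z = f 0 from hconst, sub_self, norm_zero]
    positivity

theorem norm_sub_one_le_of_norm_sub_ofReal_le {u : ℂ} {a r : ℝ} (ha : 0 ≤ a) (ha1 : a ≤ 1)
    (hr : 0 ≤ r) (hr1 : r < 1) (h : ‖u - a‖ ≤ r * ‖1 - a * u‖) :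
    ‖u - 1‖ ≤ (1 - a) * (1 + r) / (1 - a * r) := by
  have hnorm_a : ‖1 - (a : ℂ)‖ = 1 - a := by
    rw [← ofReal_one, ← ofReal_sub, norm_real, Real.norm_of_nonneg (sub_nonneg.2 ha1)]
  have h1 : ‖u - 1‖ ≤ ‖u - a‖ + (1 - a) := by
    simpa only [norm_sub_rev (a : ℂ), hnorm_a] using norm_sub_le_norm_sub_add_norm_sub u a 1
  have h2 : ‖1 - a * u‖ ≤ (1 - a) + a * ‖u - 1‖ := by
    calc ‖1 - a * u‖ = ‖(1 - a) - a * (u - 1)‖ := by ring_nf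
      _ ≤ ‖1 - (a : ℂ)‖ + ‖a * (u - 1)‖ := norm_sub_le _ _
      _ = (1 - a) + a * ‖u - 1‖ := by rw [hnorm_a, norm_mul, norm_real, Real.norm_of_nonneg ha]
  rw [le_div_iff₀ (by nlinarith)]
  nlinarith [mul_le_mul_of_nonneg_left h2 hr, norm_nonneg (u - 1)]

end Complex

/-- If `ω` is an analytic self-map of the unit disc with `ω(0) = 0` and
`ω'(0) = a ∈ (0,1]`, then `|ω(z) - z| ≤ (1-a)·|z|(1+|z|)/(1-a|z|)` on the disc. -/
theorem dist_to_identity (ω : ℂ → ℂ) (a : ℝ)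
    (hω : DifferentiableOn ℂ ω (ball 0 1))
    (hmaps : MapsTo ω (ball 0 1) (ball 0 1))
    (h0 : ω 0 = 0)
    (ha : 0 < a) (ha1 : a ≤ 1) (hderiv : deriv ω 0 = (a : ℂ)) :
    ∀ z ∈ ball (0 : ℂ) 1,
      ‖ω z - z‖ ≤ (1 - a) * (‖z‖ * (1 + ‖z‖)) / (1 - a * ‖z‖) := by
  intro z hz
  set g := dslope ω 0
  have hg : DifferentiableOn ℂ g (ball 0 1) :=
    (Complex.differentiableOn_dslope (isOpen_ball.mem_nhds (mem_ball_self one_pos))).2 hω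
  have hg_maps : MapsTo g (ball 0 1) (closedBall 0 1) := fun w hw => by
    have hω_maps : MapsTo ω (ball 0 1) (closedBall (ω 0) 1) := by
      rw [h0]; exact hmaps.mono_right ball_subset_closedBall
    simpa using Complex.norm_dslope_le_div_of_mapsTo_ball hω hω_maps hw
  have hg0 : g 0 = a := by simp [g, hderiv]
  have hpick := Complex.norm_sub_le_mul_norm_one_sub_conj_mul_of_mapsTo_ball hg hg_maps hz
  rw [hg0, Complex.conj_ofReal] at hpick
  have hgz := Complex.norm_sub_one_le_of_norm_sub_ofReal_le ha.le ha1 (norm_nonneg z)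
    (mem_ball_zero_iff.1 hz) hpick
  have hωz : ω z - z = z * (g z - 1) := by
    have := sub_smul_dslope ω 0 z
    simp only [sub_zero, smul_eq_mul, h0] at this
    linear_combination -this
  calc ‖ω z - z‖ = ‖z‖ * ‖g z - 1‖ := by rw [hωz, norm_mul]
    _ ≤ ‖z‖ * ((1 - a) * (1 + ‖z‖) / (1 - a * ‖z‖)) := by gcongr
    _ = (1 - a) * (‖z‖ * (1 + ‖z‖)) / (1 - a * ‖z‖) := by ring
end

section
/- Let ω : 𝔻 → 𝔻 be analytic with ω(0) = 0 and ω'(0) = a ∈ (0,1]. Then for all z ∈ 𝔻, |ω(z)| ≤ |z| · (|z| + a)/(1 + a|z|). -/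
/-!
The function `g = dslope ω 0`, i.e. `ω(z)/z`, maps the disc into the closed disc and has
`g 0 = a`. If `a = 1` the bound is just `|z|`, the Schwarz lemma. If `a < 1`, the maximum
modulus principle puts `g` inside the open disc, so the Schwarz lemma applies to the disc
automorphism `(g - a)/(1 - a g)`, which vanishes at `0`: the pseudo-hyperbolic distance from
`g z` to `a` is at most `|z|`. The largest modulus in that pseudo-hyperbolic disc, attained
on the positive real axis, is `(|z| + a)/(1 + a|z|)`.
-/

open Metric Set ComplexConjugate

namespace Complex

theorem norm_one_sub_conj_mul_sq_sub_norm_sub_sq (c w : ℂ) :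
    ‖1 - conj c * w‖ ^ 2 - ‖w - c‖ ^ 2 = (1 - ‖c‖ ^ 2) * (1 - ‖w‖ ^ 2) := by
  simp only [Complex.sq_norm, normSq_apply, sub_re, sub_im, mul_re, mul_im, one_re, one_im,
    conj_re, conj_im]
  ring

theorem norm_sub_lt_norm_one_sub_conj_mul {c w : ℂ} (hc : ‖c‖ < 1) (hw : ‖w‖ < 1) :
    ‖w - c‖ < ‖1 - conj c * w‖ := by
  refine lt_of_pow_lt_pow_left₀ 2 (norm_nonneg _) (sub_pos.1 ?_)
  rw [norm_one_sub_conj_mul_sq_sub_norm_sub_sq]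
  have hc' : ‖c‖ ^ 2 < 1 := pow_lt_one₀ (norm_nonneg c) hc two_ne_zero
  have hw' : ‖w‖ ^ 2 < 1 := pow_lt_one₀ (norm_nonneg w) hw two_ne_zero
  exact mul_pos (sub_pos.2 hc') (sub_pos.2 hw')

theorem norm_sub_apply_zero_le_mul_of_mapsTo_ball {g : ℂ → ℂ}
    (hd : DifferentiableOn ℂ g (ball 0 1)) (hmaps : MapsTo g (ball 0 1) (ball 0 1))
    {z : ℂ} (hz : z ∈ ball 0 1) :
    ‖g z - g 0‖ ≤ ‖z‖ * ‖1 - conj (g 0) * g z‖ := by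
  have hg0 : ‖g 0‖ < 1 := mem_ball_zero_iff.1 (hmaps (mem_ball_self one_pos))
  have hlt : ∀ w ∈ ball (0 : ℂ) 1, ‖g w - g 0‖ < ‖1 - conj (g 0) * g w‖ := fun w hw =>
    norm_sub_lt_norm_one_sub_conj_mul hg0 (mem_ball_zero_iff.1 (hmaps hw))
  have hden : ∀ w ∈ ball (0 : ℂ) 1, 1 - conj (g 0) * g w ≠ 0 := fun w hw =>
    norm_pos_iff.1 ((norm_nonneg _).trans_lt (hlt w hw))
  set h : ℂ → ℂ := fun w => (g w - g 0) / (1 - conj (g 0) * g w)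
  have hhd : DifferentiableOn ℂ h (ball 0 1) :=
    (hd.sub_const _).div ((differentiableOn_const _).sub (hd.const_mul _)) hden
  have hh : MapsTo h (ball 0 1) (closedBall 0 1) := fun w hw => by
    rw [mem_closedBall_zero_iff, norm_div]
    exact div_le_one_of_le₀ (hlt w hw).le (norm_nonneg _)
  have hschwarz : ‖h z‖ ≤ ‖z‖ := norm_le_norm_of_mapsTo_ball hhd hh (by simp [h])
    (mem_ball_zero_iff.1 hz)
  rwa [norm_div, div_le_iff₀ (norm_pos_iff.2 (hden z hz))] at hschwarz

theorem norm_le_of_norm_sub_ofReal_le_mul {a t : ℝ} {w : ℂ} (ha : 0 ≤ a) (ht : 0 ≤ t)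
    (ht1 : t ≤ 1) (haw : a * ‖w‖ ≤ 1) (h : ‖w - a‖ ≤ t * ‖1 - a * w‖) :
    ‖w‖ ≤ (t + a) / (1 + a * t) := by
  set s := ‖w‖
  have hre : w.re ≤ s := re_le_norm w
  have hsq : ‖w - a‖ ^ 2 ≤ t ^ 2 * ‖1 - a * w‖ ^ 2 := by
    rw [← mul_pow]; exact pow_le_pow_left₀ (norm_nonneg _) h 2
  have hexp : s ^ 2 - 2 * a * w.re + a ^ 2 ≤ t ^ 2 * (1 - 2 * a * w.re + a ^ 2 * s ^ 2) := by
    convert hsq using 1 <;>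
      simp only [s, Complex.sq_norm, normSq_apply, sub_re, sub_im, mul_re, mul_im, one_re,
        one_im, ofReal_re, ofReal_im] <;> ring
  -- `hexp` with `re w ≤ s` is a quadratic inequality in `s`, factored here over its roots.
  have hquad : (s * (1 + a * t) - (t + a)) * (s * (1 - a * t) - (a - t)) ≤ 0 := by
    nlinarith [mul_nonneg (mul_nonneg ha (by nlinarith : (0 : ℝ) ≤ 1 - t ^ 2))
      (sub_nonneg.2 hre)]
  have horder : s * (1 + a * t) - (t + a) ≤ s * (1 - a * t) - (a - t) := by
    nlinarith [mul_nonneg ht (sub_nonneg.2 haw)]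
  rw [le_div_iff₀ (by positivity)]
  by_contra! hpos
  exact hquad.not_gt (mul_pos (sub_pos.2 hpos) ((sub_pos.2 hpos).trans_le horder))

end Complex

theorem mapsTo_ball_of_mapsTo_closedBall {E F : Type*} [NormedAddCommGroup E]
    [NormedSpace ℂ E] [NormedAddCommGroup F] [NormedSpace ℂ F] {f : E → F} {U : Set E}
    {c : E} {r : ℝ} (hU : IsPreconnected U) (ho : IsOpen U) (hd : DifferentiableOn ℂ f U)
    (hmaps : MapsTo f U (closedBall 0 r)) (hc : c ∈ U) (hfc : ‖f c‖ < r) :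
    MapsTo f U (ball 0 r) := by
  intro z hz
  rw [mem_ball_zero_iff]
  refine (mem_closedBall_zero_iff.1 (hmaps hz)).lt_of_ne fun hzr => hfc.ne ?_
  have hmax : IsMaxOn (norm ∘ f) U z := fun w hw => by
    simpa [hzr] using mem_closedBall_zero_iff.1 (hmaps hw)
  simpa [hzr] using Complex.norm_eqOn_of_isPreconnected_of_isMaxOn hU ho hd hz hmax hc

/-- Refined Schwarz lemma: if `ω` is an analytic self-map of the unit disc with
`ω(0) = 0` and `ω'(0) = a ∈ (0,1]`, then `|ω(z)| ≤ |z|·(|z|+a)/(1+a|z|)`. -/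
theorem growth_estimate (ω : ℂ → ℂ) (a : ℝ)
    (hω : DifferentiableOn ℂ ω (ball 0 1))
    (hmaps : MapsTo ω (ball 0 1) (ball 0 1))
    (h0 : ω 0 = 0)
    (ha : 0 < a) (ha1 : a ≤ 1) (hderiv : deriv ω 0 = (a : ℂ)) :
    ∀ z ∈ ball (0 : ℂ) 1, ‖ω z‖ ≤ ‖z‖ * ((‖z‖ + a) / (1 + a * ‖z‖)) := by
  intro z hz
  have hz1 : ‖z‖ < 1 := mem_ball_zero_iff.1 hz
  have hmaps' : MapsTo ω (ball 0 1) (closedBall 0 1) := hmaps.mono_right ball_subset_closedBall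
  rcases ha1.lt_or_eq with ha1 | rfl
  · set g := dslope ω 0
    have hgd : DifferentiableOn ℂ g (ball 0 1) :=
      (Complex.differentiableOn_dslope (ball_mem_nhds _ one_pos)).2 hω
    have hg0 : g 0 = a := by rw [← hderiv]; exact dslope_same ω 0
    have hgle : MapsTo g (ball 0 1) (closedBall 0 1) := fun w hw => by
      simpa using Complex.norm_dslope_le_div_of_mapsTo_ball hω (by rwa [h0]) hw
    have hglt : MapsTo g (ball 0 1) (ball 0 1) :=
      mapsTo_ball_of_mapsTo_closedBall (convex_ball _ _).isPreconnected isOpen_ball hgd hgle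
        (mem_ball_self one_pos) (by simpa [hg0, abs_of_pos ha])
    have hpick := Complex.norm_sub_apply_zero_le_mul_of_mapsTo_ball hgd hglt hz
    rw [hg0, Complex.conj_ofReal] at hpick
    have hgz1 : ‖g z‖ ≤ 1 := mem_closedBall_zero_iff.1 (hgle hz)
    have hgz := Complex.norm_le_of_norm_sub_ofReal_le_mul ha.le (norm_nonneg z) hz1.le
      (by nlinarith [norm_nonneg (g z)]) hpick
    calc ‖ω z‖ = ‖z‖ * ‖g z‖ := by
          have hω_eq := sub_smul_dslope ω 0 z
          rw [sub_zero, h0, sub_zero, smul_eq_mul] at hω_eq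
          rw [← hω_eq, norm_mul]
      _ ≤ ‖z‖ * ((‖z‖ + a) / (1 + a * ‖z‖)) := by gcongr
  · have hschwarz := Complex.norm_le_norm_of_mapsTo_ball hω hmaps' h0 hz1
    rwa [one_mul, add_comm 1, div_self (by positivity), mul_one]
end

section
/- Let ω : 𝔻 → 𝔻 be analytic with ω(0) = 0 and ω'(0) = a ∈ (0,1]. Then for all z ∈ 𝔻, |ω(z)/z - a(1-|z|²)/(1 - a²|z|²)| ≤ (1 - a²)|z| / (1 - a²|z|²). -/
/-!
Schwarz's lemma applied to `ω` gives `‖g‖ ≤ 1` on the disc, and `g 0 = ω'(0) = a`. For `a < 1`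
the Möbius map `w ↦ (a - w) / (1 - a w)` sends `g` to a self-map of the disc vanishing at `0`, so
a second application of Schwarz's lemma gives `‖a - g z‖ ≤ ‖z‖ ‖1 - a g z‖`; for `a = 1` the
maximum modulus principle forces `g ≡ 1`, and the same inequality holds trivially. For fixed
`t = ‖z‖` this inequality describes the closed disc bounded by an Apollonius circle, whose centre
and radius are the ones in the statement.
-/

open Metric Set Filter Topology

lemma eqOn_dslope_zero_of_eq_mul {𝕜 : Type*} [NontriviallyNormedField 𝕜] {ω g : 𝕜 → 𝕜}
    {s : Set 𝕜} (hs : IsOpen s) (hg : DifferentiableOn 𝕜 g s) (h0 : ω 0 = 0)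
    (hfactor : ∀ z ∈ s, ω z = z * g z) : EqOn (dslope ω 0) g s := by
  intro z hz
  rcases eq_or_ne z 0 with rfl | hz0
  · have hω : ω =ᶠ[𝓝 0] fun z => z * g z := eventually_of_mem (hs.mem_nhds hz) hfactor
    have hderiv := (hasDerivAt_id' 0).fun_mul (hg.differentiableAt (hs.mem_nhds hz)).hasDerivAt
    simpa [dslope_same, hω.deriv_eq] using hderiv.deriv
  · rw [dslope_of_ne _ hz0, slope_def_field, hfactor z hz, h0, sub_zero, sub_zero,
      mul_div_cancel_left₀ _ hz0]

lemma norm_one_sub_mul_sq_sub_norm_sub_sq (a : ℝ) (w : ℂ) :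
    ‖1 - a * w‖ ^ 2 - ‖a - w‖ ^ 2 = (1 - a ^ 2) * (1 - ‖w‖ ^ 2) := by
  simp only [Complex.sq_norm, Complex.normSq_apply, Complex.sub_re, Complex.sub_im,
    Complex.mul_re, Complex.mul_im, Complex.ofReal_re, Complex.ofReal_im, Complex.one_re,
    Complex.one_im]
  ring

lemma norm_sub_le_norm_one_sub_mul {a : ℝ} {w : ℂ} (ha : |a| ≤ 1) (hw : ‖w‖ ≤ 1) :
    ‖a - w‖ ≤ ‖1 - a * w‖ := by
  have hprod : 0 ≤ (1 - a ^ 2) * (1 - ‖w‖ ^ 2) := by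
    have ha2 : a ^ 2 ≤ 1 := (sq_le_one_iff_abs_le_one a).2 ha
    have hw2 : ‖w‖ ^ 2 ≤ 1 := pow_le_one₀ (norm_nonneg w) hw
    apply mul_nonneg <;> linarith
  have key := norm_one_sub_mul_sq_sub_norm_sub_sq a w
  exact (pow_le_pow_iff_left₀ (norm_nonneg _) (norm_nonneg _) two_ne_zero).1 (by linarith)

lemma norm_sub_le_of_norm_sub_le_mul_norm_one_sub_mul {a t : ℝ} {w : ℂ} (ht : 0 ≤ t)
    (ha : a ^ 2 ≤ 1) (hat : a ^ 2 * t ^ 2 < 1) (h : ‖a - w‖ ≤ t * ‖1 - a * w‖) :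
    ‖w - ((a * (1 - t ^ 2) / (1 - a ^ 2 * t ^ 2) : ℝ) : ℂ)‖ ≤
      (1 - a ^ 2) * t / (1 - a ^ 2 * t ^ 2) := by
  have hD : 0 < 1 - a ^ 2 * t ^ 2 := by linarith
  have key : ‖w - ((a * (1 - t ^ 2) / (1 - a ^ 2 * t ^ 2) : ℝ) : ℂ)‖ ^ 2
        - ((1 - a ^ 2) * t / (1 - a ^ 2 * t ^ 2)) ^ 2 =
      (‖a - w‖ ^ 2 - t ^ 2 * ‖1 - a * w‖ ^ 2) / (1 - a ^ 2 * t ^ 2) := by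
    simp only [Complex.sq_norm, Complex.normSq_apply, Complex.sub_re, Complex.sub_im,
      Complex.mul_re, Complex.mul_im, Complex.ofReal_re, Complex.ofReal_im, Complex.one_re,
      Complex.one_im]
    field_simp
    ring
  have hsq : ‖a - w‖ ^ 2 ≤ t ^ 2 * ‖1 - a * w‖ ^ 2 := by
    rw [← mul_pow]
    exact pow_le_pow_left₀ (norm_nonneg _) h 2
  have hquot : (‖a - w‖ ^ 2 - t ^ 2 * ‖1 - a * w‖ ^ 2) / (1 - a ^ 2 * t ^ 2) ≤ 0 :=
    div_nonpos_of_nonpos_of_nonneg (by linarith) hD.le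
  have hr : 0 ≤ (1 - a ^ 2) * t / (1 - a ^ 2 * t ^ 2) :=
    div_nonneg (mul_nonneg (by linarith) ht) hD.le
  exact (pow_le_pow_iff_left₀ (norm_nonneg _) hr two_ne_zero).1 (by linarith)

lemma norm_sub_le_norm_mul_norm_one_sub_mul {g : ℂ → ℂ} {a : ℝ}
    (hg : DifferentiableOn ℂ g (ball 0 1)) (hg1 : MapsTo g (ball 0 1) (closedBall 0 1))
    (hg0 : g 0 = a) (ha : |a| < 1) {z : ℂ} (hz : z ∈ ball 0 1) :
    ‖a - g z‖ ≤ ‖z‖ * ‖1 - a * g z‖ := by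
  have hden : ∀ y ∈ ball (0 : ℂ) 1, 1 - a * g y ≠ 0 := fun y hy => by
    refine sub_ne_zero.2 (ne_of_apply_ne norm ?_).symm
    rw [norm_one, norm_mul, Complex.norm_real, Real.norm_eq_abs]
    have := mem_closedBall_zero_iff.1 (hg1 hy)
    nlinarith [abs_nonneg a, norm_nonneg (g y)]
  have hmobius : ‖(a - g z) / (1 - a * g z)‖ ≤ ‖z‖ := by
    refine Complex.norm_le_norm_of_mapsTo_ball (f := fun y => (a - g y) / (1 - a * g y))
      ((differentiableOn_const _).sub hg |>.div ((differentiableOn_const _).sub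
        ((differentiableOn_const _).mul hg)) hden) (fun y hy => ?_) (by simp [hg0])
      (mem_ball_zero_iff.1 hz)
    rw [mem_closedBall_zero_iff, norm_div, div_le_one (norm_pos_iff.2 (hden y hy))]
    exact norm_sub_le_norm_one_sub_mul ha.le (mem_closedBall_zero_iff.1 (hg1 hy))
  rwa [norm_div, div_le_iff₀ (norm_pos_iff.2 (hden z hz))] at hmobius

lemma eqOn_one_of_apply_zero_eq_one {g : ℂ → ℂ} (hg : DifferentiableOn ℂ g (ball 0 1))
    (hg1 : MapsTo g (ball 0 1) (closedBall 0 1)) (hg0 : g 0 = 1) :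
    EqOn g 1 (ball 0 1) := by
  have hmax : IsMaxOn (norm ∘ g) (ball 0 1) 0 := fun y hy => by
    simpa [hg0] using hg1 hy
  simpa [hg0] using Complex.eq_const_of_exists_max hg (mem_ball_self one_pos) hmax

/-- Euclidean form of the Schwarz–Pick inequality for `g(z) = ω(z)/z`, where `ω` is
an analytic self-map of the unit disc with `ω(0) = 0` and `ω'(0) = a ∈ (0,1]`:
`|g(z) - a(1-|z|²)/(1-a²|z|²)| ≤ (1-a²)|z|/(1-a²|z|²)`. -/
theorem schwarz_pick_euclidean (ω g : ℂ → ℂ) (a : ℝ)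
    (hω : DifferentiableOn ℂ ω (ball 0 1))
    (hmaps : MapsTo ω (ball 0 1) (ball 0 1))
    (h0 : ω 0 = 0)
    (hg : DifferentiableOn ℂ g (ball 0 1))
    (hfactor : ∀ z ∈ ball (0 : ℂ) 1, ω z = z * g z)
    (ha : 0 < a) (ha1 : a ≤ 1) (hderiv : deriv ω 0 = (a : ℂ)) :
    ∀ z ∈ ball (0 : ℂ) 1,
      ‖g z - ((a * (1 - ‖z‖ ^ 2) / (1 - a ^ 2 * ‖z‖ ^ 2) : ℝ) : ℂ)‖ ≤
        (1 - a ^ 2) * ‖z‖ / (1 - a ^ 2 * ‖z‖ ^ 2) := by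
  intro z hz
  have hslope : EqOn (dslope ω 0) g (ball 0 1) :=
    eqOn_dslope_zero_of_eq_mul isOpen_ball hg h0 hfactor
  have hg0 : g 0 = a := by rw [← hslope (mem_ball_self one_pos), dslope_same, hderiv]
  have hg1 : MapsTo g (ball 0 1) (closedBall 0 1) := fun y hy => by
    have := Complex.norm_dslope_le_div_of_mapsTo_ball hω
      (by rw [h0]; exact hmaps.mono_right ball_subset_closedBall) hy
    rwa [hslope hy, div_one, ← mem_closedBall_zero_iff] at this
  have hpick : ‖a - g z‖ ≤ ‖z‖ * ‖1 - a * g z‖ := by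
    rcases ha1.lt_or_eq with ha1 | rfl
    · exact norm_sub_le_norm_mul_norm_one_sub_mul hg hg1 hg0 (abs_lt.2 ⟨by linarith, ha1⟩) hz
    · simp [eqOn_one_of_apply_zero_eq_one hg hg1 (by simpa using hg0) hz]
  have ha2 : a ^ 2 ≤ 1 := pow_le_one₀ ha.le ha1
  have hz2 : ‖z‖ ^ 2 < 1 := pow_lt_one₀ (norm_nonneg z) (mem_ball_zero_iff.1 hz) two_ne_zero
  exact norm_sub_le_of_norm_sub_le_mul_norm_one_sub_mul (norm_nonneg z) ha2
    (by nlinarith [sq_nonneg ‖z‖]) hpick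
end

section
/- Let ω : 𝔻 → 𝔻 be analytic with ω(0) = 0 and ω'(0) = σ ∈ (0,1). Then ω is injective on the disc 𝔻(0, ρ) where ρ = σ/(1 + √(1 - σ²)). -/
/-!
Suppose `ω z₁ = ω z₂ = w` with `z₁ ≠ z₂`. With the disc automorphism `φₐ z = (z - a) / (1 - ā z)`,
the self-map `F = φ_w ∘ ω` of the disc vanishes at `z₁` and `z₂`, so dividing out twice gives
`F = φ_{z₁} φ_{z₂} G` with `|G| ≤ 1`. Comparing `F 0 = -w` and `F' 0 = (1 - |w|²) σ` with the values
read off this factorisation, and bounding `G' 0` by Schwarz–Pick, gives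
`σ (1 - |w|²) ≤ t (r₁ + r₂) (1 - r₁ r₂) + r₁ r₂ (1 - t²)` where `rᵢ = |zᵢ|`, `t = |G 0|` and
`|w| = r₁ r₂ t`. This is impossible once `r₁, r₂ < ρ`, because `ρ` is the smaller root of
`σ x² - 2 x + σ`.
-/

open Metric Set Function ComplexConjugate Topology

noncomputable def blaschkeFactor (a z : ℂ) : ℂ := (z - a) / (1 - conj a * z)

section BlaschkeFactor

variable {a z : ℂ}

theorem blaschkeFactor_self (a : ℂ) : blaschkeFactor a a = 0 := by simp [blaschkeFactor]

theorem blaschkeFactor_zero (a : ℂ) : blaschkeFactor a 0 = -a := by simp [blaschkeFactor]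

theorem one_sub_conj_mul_self (a : ℂ) : 1 - conj a * a = ((1 - ‖a‖ ^ 2 : ℝ) : ℂ) := by
  push_cast [Complex.conj_mul']; rfl

theorem one_sub_conj_mul_ne_zero (h : ‖a‖ * ‖z‖ < 1) : 1 - conj a * z ≠ 0 := by
  intro h1
  have := congrArg norm (sub_eq_zero.1 h1)
  rw [norm_one, norm_mul, Complex.norm_conj] at this
  linarith

theorem norm_one_sub_conj_mul_sq_sub_norm_sub_sq (a z : ℂ) :
    ‖1 - conj a * z‖ ^ 2 - ‖z - a‖ ^ 2 = (1 - ‖a‖ ^ 2) * (1 - ‖z‖ ^ 2) := by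
  simp only [Complex.sq_norm, Complex.normSq_apply, Complex.sub_re, Complex.sub_im,
    Complex.mul_re, Complex.mul_im, Complex.one_re, Complex.one_im, Complex.conj_re,
    Complex.conj_im]
  ring

theorem norm_blaschkeFactor_le_one (ha : ‖a‖ < 1) (hz : ‖z‖ ≤ 1) : ‖blaschkeFactor a z‖ ≤ 1 := by
  have hden := one_sub_conj_mul_ne_zero (a := a) (z := z) (by nlinarith [norm_nonneg a])
  rw [blaschkeFactor, norm_div, div_le_one (norm_pos_iff.2 hden)]
  refine le_of_pow_le_pow_left₀ two_ne_zero (norm_nonneg _) ?_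
  nlinarith [norm_one_sub_conj_mul_sq_sub_norm_sub_sq a z, norm_nonneg a, norm_nonneg z,
    mul_nonneg (sub_nonneg.2 ha.le) (sub_nonneg.2 hz)]

theorem norm_blaschkeFactor_lt_one (ha : ‖a‖ < 1) (hz : ‖z‖ < 1) : ‖blaschkeFactor a z‖ < 1 := by
  have hden := one_sub_conj_mul_ne_zero (a := a) (z := z) (by nlinarith [norm_nonneg a])
  rw [blaschkeFactor, norm_div, div_lt_one (norm_pos_iff.2 hden)]
  refine lt_of_pow_lt_pow_left₀ 2 (norm_nonneg _) ?_
  nlinarith [norm_one_sub_conj_mul_sq_sub_norm_sub_sq a z, norm_nonneg a, norm_nonneg z,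
    mul_pos (sub_pos.2 ha) (sub_pos.2 hz)]

theorem blaschkeFactor_eq_zero_iff (h : ‖a‖ * ‖z‖ < 1) : blaschkeFactor a z = 0 ↔ z = a := by
  simp [blaschkeFactor, one_sub_conj_mul_ne_zero h, sub_eq_zero]

theorem blaschkeFactor_neg_blaschkeFactor (ha : ‖a‖ < 1) (hz : ‖z‖ < 1) :
    blaschkeFactor (-a) (blaschkeFactor a z) = z := by
  have hz' := one_sub_conj_mul_ne_zero (a := a) (z := z) (by nlinarith [norm_nonneg a])
  have ha' := one_sub_conj_mul_ne_zero (a := a) (z := a) (by nlinarith [norm_nonneg a])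
  have key : 1 - conj (-a) * blaschkeFactor a z = (1 - conj a * a) / (1 - conj a * z) := by
    rw [blaschkeFactor, eq_div_iff hz', sub_mul, mul_assoc, div_mul_cancel₀ _ hz', map_neg]
    ring
  rw [blaschkeFactor, key, div_eq_iff (div_ne_zero ha' hz'), blaschkeFactor, div_sub' hz',
    mul_div_assoc', div_left_inj' hz']
  ring

theorem hasDerivAt_blaschkeFactor (h : 1 - conj a * z ≠ 0) :
    HasDerivAt (blaschkeFactor a) (((1 - ‖a‖ ^ 2 : ℝ) : ℂ) / (1 - conj a * z) ^ 2) z := by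
  have hnum : HasDerivAt (fun w : ℂ => w - a) 1 z := (hasDerivAt_id z).sub_const a
  have hden : HasDerivAt (fun w : ℂ => 1 - conj a * w) (-conj a) z := by
    simpa using ((hasDerivAt_id z).const_mul (conj a)).const_sub 1
  exact (hnum.div hden h).congr_deriv (by rw [← one_sub_conj_mul_self]; ring)

theorem hasDerivAt_blaschkeFactor_zero (a : ℂ) :
    HasDerivAt (blaschkeFactor a) ((1 - ‖a‖ ^ 2 : ℝ) : ℂ) 0 := by
  simpa using hasDerivAt_blaschkeFactor (a := a) (z := 0) (by simp)

theorem differentiableOn_blaschkeFactor (ha : ‖a‖ < 1) :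
    DifferentiableOn ℂ (blaschkeFactor a) (closedBall 0 1) := fun z hz =>
  have hden : 1 - conj a * z ≠ 0 :=
    one_sub_conj_mul_ne_zero (by nlinarith [norm_nonneg a, mem_closedBall_zero_iff.1 hz])
  (hasDerivAt_blaschkeFactor hden).differentiableAt.differentiableWithinAt

theorem mapsTo_blaschkeFactor_ball (ha : ‖a‖ < 1) :
    MapsTo (blaschkeFactor a) (ball 0 1) (ball 0 1) := fun _ hz => by
  rw [mem_ball_zero_iff] at hz ⊢; exact norm_blaschkeFactor_lt_one ha hz

theorem mapsTo_blaschkeFactor_closedBall (ha : ‖a‖ < 1) :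
    MapsTo (blaschkeFactor a) (closedBall 0 1) (closedBall 0 1) := fun _ hz => by
  rw [mem_closedBall_zero_iff] at hz ⊢; exact norm_blaschkeFactor_le_one ha hz

end BlaschkeFactor

section SelfMapsOfDisc

variable {f : ℂ → ℂ}

theorem norm_deriv_zero_le_one_sub_sq (hd : DifferentiableOn ℂ f (ball 0 1))
    (hf : MapsTo f (ball 0 1) (closedBall 0 1)) : ‖deriv f 0‖ ≤ 1 - ‖f 0‖ ^ 2 := by
  have h0 : (0 : ℂ) ∈ ball (0 : ℂ) 1 := mem_ball_self one_pos
  have hf0 : ‖f 0‖ ≤ 1 := mem_closedBall_zero_iff.1 (hf h0)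
  have hfd : ∀ᶠ z in 𝓝 0, DifferentiableAt ℂ f z :=
    hd.eventually_differentiableAt (isOpen_ball.mem_nhds h0)
  rcases hf0.lt_or_eq with hlt | heq
  · set a := f 0
    have hpos : 0 < 1 - ‖a‖ ^ 2 := by nlinarith [norm_nonneg a]
    have ha : 1 - conj a * a ≠ 0 := one_sub_conj_mul_ne_zero (by nlinarith [norm_nonneg a])
    have hB : HasDerivAt (blaschkeFactor a ∘ f) (deriv f 0 / ((1 - ‖a‖ ^ 2 : ℝ) : ℂ)) 0 :=
      ((hasDerivAt_blaschkeFactor ha).comp 0 hfd.self_of_nhds.hasDerivAt).congr_deriv (by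
        rw [one_sub_conj_mul_self] at ha ⊢
        field_simp)
    have hmaps :
        MapsTo (blaschkeFactor a ∘ f) (ball 0 1) (closedBall ((blaschkeFactor a ∘ f) 0) 1) := by
      rw [comp_apply, blaschkeFactor_self]
      exact (mapsTo_blaschkeFactor_closedBall hlt).comp hf
    have := Complex.norm_deriv_le_div_of_mapsTo_ball
      ((differentiableOn_blaschkeFactor hlt).comp hd hf) hmaps one_pos
    rw [hB.deriv, norm_div, Complex.norm_real, Real.norm_of_nonneg hpos.le, div_one,
      div_le_one hpos] at this
    exact this
  · have hmax : IsLocalMax (norm ∘ f) 0 := by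
      filter_upwards [isOpen_ball.mem_nhds h0] with z hz
      simpa [heq] using mem_closedBall_zero_iff.1 (hf hz)
    have hconst : f =ᶠ[𝓝 0] fun _ => f 0 := Complex.eventually_eq_of_isLocalMax_norm hfd hmax
    rw [hconst.deriv_eq, deriv_const, heq]
    norm_num

theorem exists_eqOn_blaschkeFactor_mul {a : ℂ} (ha : ‖a‖ < 1)
    (hd : DifferentiableOn ℂ f (ball 0 1)) (hf : MapsTo f (ball 0 1) (closedBall 0 1))
    (hfa : f a = 0) :
    ∃ g : ℂ → ℂ, DifferentiableOn ℂ g (ball 0 1) ∧ MapsTo g (ball 0 1) (closedBall 0 1) ∧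
      EqOn f (fun z => blaschkeFactor a z * g z) (ball 0 1) := by
  have ha' : ‖-a‖ < 1 := by rwa [norm_neg]
  set h := f ∘ blaschkeFactor (-a)
  have hh0 : h 0 = 0 := by simpa [h, blaschkeFactor_zero] using hfa
  have hhd : DifferentiableOn ℂ h (ball 0 1) :=
    hd.comp ((differentiableOn_blaschkeFactor ha').mono ball_subset_closedBall)
      (mapsTo_blaschkeFactor_ball ha')
  have hhmaps : MapsTo h (ball 0 1) (closedBall (h 0) 1) :=
    hh0.symm ▸ hf.comp (mapsTo_blaschkeFactor_ball ha')
  refine ⟨dslope h 0 ∘ blaschkeFactor a, ?_, ?_, fun z hz => ?_⟩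
  · exact ((Complex.differentiableOn_dslope (isOpen_ball.mem_nhds (mem_ball_self one_pos))).2
      hhd).comp ((differentiableOn_blaschkeFactor ha).mono ball_subset_closedBall)
      (mapsTo_blaschkeFactor_ball ha)
  · intro z hz
    simpa using
      Complex.norm_dslope_le_div_of_mapsTo_ball hhd hhmaps (mapsTo_blaschkeFactor_ball ha hz)
  · have := sub_smul_dslope h 0 (blaschkeFactor a z)
    rw [hh0, sub_zero, sub_zero, smul_eq_mul] at this
    simp only [comp_apply, this, h, blaschkeFactor_neg_blaschkeFactor ha (mem_ball_zero_iff.1 hz)]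

theorem exists_norm_deriv_zero_le_of_two_zeros {z₁ z₂ : ℂ} (hz₁ : ‖z₁‖ < 1) (hz₂ : ‖z₂‖ < 1)
    (hne : z₁ ≠ z₂) (hd : DifferentiableOn ℂ f (ball 0 1))
    (hf : MapsTo f (ball 0 1) (closedBall 0 1)) (h₁ : f z₁ = 0) (h₂ : f z₂ = 0) :
    ∃ t ∈ Icc (0 : ℝ) 1, ‖f 0‖ = ‖z₁‖ * ‖z₂‖ * t ∧
      ‖deriv f 0‖ ≤ t * (‖z₁‖ + ‖z₂‖) * (1 - ‖z₁‖ * ‖z₂‖) + ‖z₁‖ * ‖z₂‖ * (1 - t ^ 2) := by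
  have h0 : (0 : ℂ) ∈ ball (0 : ℂ) 1 := mem_ball_self one_pos
  obtain ⟨g, hgd, hgm, hfg⟩ := exists_eqOn_blaschkeFactor_mul hz₁ hd hf h₁
  have hg₂ : g z₂ = 0 := by
    have hB : blaschkeFactor z₁ z₂ ≠ 0 := by
      rw [Ne, blaschkeFactor_eq_zero_iff (by nlinarith [norm_nonneg z₁, norm_nonneg z₂])]
      exact hne.symm
    simpa [h₂, hB] using hfg (mem_ball_zero_iff.2 hz₂)
  obtain ⟨G, hGd, hGm, hgG⟩ := exists_eqOn_blaschkeFactor_mul hz₂ hgd hgm hg₂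
  have hfG : f =ᶠ[𝓝 0] fun z => blaschkeFactor z₁ z * (blaschkeFactor z₂ z * G z) := by
    filter_upwards [isOpen_ball.mem_nhds h0] with z hz
    exact (hfg hz).trans (congrArg _ (hgG hz))
  have hf0 : f 0 = z₁ * z₂ * G 0 := by
    rw [hfG.eq_of_nhds, blaschkeFactor_zero, blaschkeFactor_zero]; ring
  have hf'0 : deriv f 0 = ((1 - ‖z₁‖ ^ 2 : ℝ) : ℂ) * (-z₂ * G 0) +
      -z₁ * (((1 - ‖z₂‖ ^ 2 : ℝ) : ℂ) * G 0 + -z₂ * deriv G 0) := by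
    have hG := (hGd.differentiableAt (isOpen_ball.mem_nhds h0)).hasDerivAt
    rw [hfG.deriv_eq, ← blaschkeFactor_zero, ← blaschkeFactor_zero]
    exact ((hasDerivAt_blaschkeFactor_zero z₁).mul
      ((hasDerivAt_blaschkeFactor_zero z₂).mul hG)).deriv
  have hG0 : ‖G 0‖ ≤ 1 := mem_closedBall_zero_iff.1 (hGm h0)
  have hG'0 : ‖deriv G 0‖ ≤ 1 - ‖G 0‖ ^ 2 := norm_deriv_zero_le_one_sub_sq hGd hGm
  have hnorm : ∀ z : ℂ, ‖z‖ < 1 → ‖((1 - ‖z‖ ^ 2 : ℝ) : ℂ)‖ = 1 - ‖z‖ ^ 2 := fun z hz => by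
    rw [Complex.norm_real, Real.norm_of_nonneg (by nlinarith [norm_nonneg z])]
  refine ⟨‖G 0‖, ⟨norm_nonneg _, hG0⟩, by simp [hf0], ?_⟩
  calc ‖deriv f 0‖
      ≤ (1 - ‖z₁‖ ^ 2) * (‖z₂‖ * ‖G 0‖) +
          ‖z₁‖ * ((1 - ‖z₂‖ ^ 2) * ‖G 0‖ + ‖z₂‖ * ‖deriv G 0‖) := by
        rw [hf'0]
        refine (norm_add_le _ _).trans ?_
        rw [norm_mul, norm_mul, norm_mul, norm_neg, norm_neg, hnorm z₁ hz₁]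
        gcongr
        refine (norm_add_le _ _).trans ?_
        rw [norm_mul, norm_mul, norm_neg, hnorm z₂ hz₂]
    _ ≤ (1 - ‖z₁‖ ^ 2) * (‖z₂‖ * ‖G 0‖) +
          ‖z₁‖ * ((1 - ‖z₂‖ ^ 2) * ‖G 0‖ + ‖z₂‖ * (1 - ‖G 0‖ ^ 2)) := by gcongr
    _ = _ := by ring

end SelfMapsOfDisc

section LandauRadius

variable {σ ρ r₁ r₂ t : ℝ}

theorem mul_one_add_sq_div_one_add_sqrt (hσ : σ ^ 2 ≤ 1) :
    σ * (1 + (σ / (1 + √(1 - σ ^ 2))) ^ 2) = 2 * (σ / (1 + √(1 - σ ^ 2))) := by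
  have hs : √(1 - σ ^ 2) ^ 2 = 1 - σ ^ 2 := Real.sq_sqrt (by linarith)
  have hpos : 0 < 1 + √(1 - σ ^ 2) := by positivity
  field_simp
  linear_combination σ * hs

theorem add_lt_mul_one_add_mul (hρσ : σ * (1 + ρ ^ 2) = 2 * ρ) (hρ1 : ρ < 1)
    (h₁ : r₁ ∈ Ico 0 ρ) (h₂ : r₂ ∈ Ico 0 ρ) : r₁ + r₂ < σ * (1 + r₁ * r₂) := by
  obtain ⟨h₁0, h₁ρ⟩ := h₁
  obtain ⟨h₂0, h₂ρ⟩ := h₂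
  have key : (1 + ρ ^ 2) * (σ * (1 + r₁ * r₂) - (r₁ + r₂)) =
      (ρ - r₁) * (1 - ρ * r₂) + (ρ - r₂) * (1 - ρ * r₁) := by
    linear_combination (1 + r₁ * r₂) * hρσ
  have : 0 < (ρ - r₁) * (1 - ρ * r₂) + (ρ - r₂) * (1 - ρ * r₁) := by
    apply add_pos <;> apply mul_pos <;> nlinarith
  nlinarith [sq_nonneg ρ]

theorem two_zeros_bound_lt (hρσ : σ * (1 + ρ ^ 2) = 2 * ρ) (hρ1 : ρ < 1)
    (h₁ : r₁ ∈ Ico 0 ρ) (h₂ : r₂ ∈ Ico 0 ρ) (ht : t ∈ Icc 0 1) :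
    t * (r₁ + r₂) * (1 - r₁ * r₂) + r₁ * r₂ * (1 - t ^ 2) < σ * (1 - (r₁ * r₂ * t) ^ 2) := by
  have hB := add_lt_mul_one_add_mul hρσ hρ1 h₁ h₂
  obtain ⟨h₁0, h₁ρ⟩ := h₁
  obtain ⟨h₂0, h₂ρ⟩ := h₂
  obtain ⟨ht0, ht1⟩ := ht
  set p := r₁ * r₂
  have hp : p ∈ Ico 0 ρ := ⟨by positivity, by nlinarith⟩
  have hA := add_lt_mul_one_add_mul hρσ hρ1 hp hp
  have hσ : σ ≤ 1 := by nlinarith [sq_nonneg (1 - ρ)]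
  have key : σ * (1 - (p * t) ^ 2) - (t * (r₁ + r₂) * (1 - p) + p * (1 - t ^ 2)) =
      (1 - t) * (σ * (1 + p * p) - (p + p)) + (1 - t) ^ 2 * p * (1 - σ * p) +
        t * (1 - p) * (σ * (1 + p) - (r₁ + r₂)) := by
    ring
  have hp1 : p < 1 := hp.2.trans hρ1
  have hconvex :
      0 < (1 - t) * (σ * (1 + p * p) - (p + p)) + t * (1 - p) * (σ * (1 + p) - (r₁ + r₂)) := by
    have hA' := sub_pos.2 hA
    have hB' := sub_pos.2 hB
    rcases ht1.lt_or_eq with ht1 | rfl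
    · have := sub_pos.2 ht1
      have := sub_pos.2 hp1
      positivity
    · simpa using mul_pos (sub_pos.2 hp1) hB'
  have : 0 ≤ (1 - t) ^ 2 * p * (1 - σ * p) := by
    have := sub_nonneg.2 (mul_le_one₀ hσ hp.1 hp1.le)
    have := hp.1
    positivity
  linarith

end LandauRadius

/-- Landau's theorem: if `ω` is an analytic self-map of the unit disc with `ω(0) = 0`
and `ω'(0) = σ ∈ (0,1)`, then `ω` is injective on the disc of radius
`ρ = σ/(1 + √(1-σ²))`. -/
theorem landau_univalence (ω : ℂ → ℂ) (σ : ℝ)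
    (hω : DifferentiableOn ℂ ω (ball 0 1))
    (hmaps : MapsTo ω (ball 0 1) (ball 0 1))
    (h0 : ω 0 = 0)
    (hσ0 : 0 < σ) (hσ1 : σ < 1) (hderiv : deriv ω 0 = (σ : ℂ)) :
    InjOn ω (ball (0 : ℂ) (σ / (1 + Real.sqrt (1 - σ ^ 2)))) := by
  set ρ := σ / (1 + √(1 - σ ^ 2))
  have hρσ : σ * (1 + ρ ^ 2) = 2 * ρ := mul_one_add_sq_div_one_add_sqrt (by nlinarith)
  have hρ1 : ρ < 1 :=
    (div_le_self hσ0.le (le_add_of_nonneg_right (Real.sqrt_nonneg _))).trans_lt hσ1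
  intro z₁ hz₁ z₂ hz₂ hωz
  by_contra hne
  rw [mem_ball_zero_iff] at hz₁ hz₂
  set w := ω z₁
  have hw : ‖w‖ < 1 := mem_ball_zero_iff.1 (hmaps (mem_ball_zero_iff.2 (hz₁.trans hρ1)))
  have hmaps_closed := hmaps.mono_right ball_subset_closedBall
  obtain ⟨t, ht, hF0, hF'0⟩ := exists_norm_deriv_zero_le_of_two_zeros (hz₁.trans hρ1)
    (hz₂.trans hρ1) hne ((differentiableOn_blaschkeFactor hw).comp hω hmaps_closed)
    ((mapsTo_blaschkeFactor_closedBall hw).comp hmaps_closed) (blaschkeFactor_self w)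
    (by rw [comp_apply, ← hωz, blaschkeFactor_self])
  have hωd : HasDerivAt ω σ 0 :=
    hderiv ▸ (hω.differentiableAt (isOpen_ball.mem_nhds (mem_ball_self one_pos))).hasDerivAt
  have hFd : HasDerivAt (blaschkeFactor w ∘ ω) (((1 - ‖w‖ ^ 2 : ℝ) : ℂ) * σ) 0 :=
    (h0 ▸ hasDerivAt_blaschkeFactor_zero w).comp 0 hωd
  have hw0 : ‖w‖ = ‖z₁‖ * ‖z₂‖ * t := by
    rwa [comp_apply, h0, blaschkeFactor_zero, norm_neg] at hF0
  rw [hFd.deriv, norm_mul, Complex.norm_real, Complex.norm_real, Real.norm_of_nonneg hσ0.le,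
    Real.norm_of_nonneg (by nlinarith [norm_nonneg w]), hw0] at hF'0
  have := two_zeros_bound_lt hρσ hρ1 ⟨norm_nonneg _, hz₁⟩ ⟨norm_nonneg _, hz₂⟩ ht
  linarith
end

section
/- Let {ω_{s,t}}_{(s,t): s≤t, s,t∈I} be a transition family on an interval I: each ω_{s,t} : 𝔻 → 𝔻 is analytic with ω_{s,t}(0)=0, ω_{s,t}'(0) > 0, ω_{t,t} = id, and ω_{t₁,t₂} ∘ ω_{t₀,t₁} = ω_{t₀,t₂} for t₀ ≤ t₁ ≤ t₂. Set a_{s,t} = ω_{s,t}'(0). Then for t₀ < t₁ < t₂ in I and z ∈ 𝔻, |ω_{t₀,t₂}(z) - ω_{t₀,t₁}(z)| ≤ (1 - a_{t₁,t₂}) · |z|(1+|z|)/(1 - a_{t₁,t₂}|z|). -/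
/-!
Write `ω_{t₀,t₂} = f ∘ ω_{t₀,t₁}` with `f = ω_{t₁,t₂}` and `a = f'(0) ∈ (0, 1]`. By the Schwarz
lemma `g = f(z)/z` maps the disc into its closure with `g(0) = a`, so Schwarz–Pick at the origin
gives `|g(z) - a| ≤ |z| |1 - a g(z)|`; two triangle inequalities turn this into
`|g(z) - 1| (1 - a|z|) ≤ (1 - a)(1 + |z|)`, i.e. `|f(z) - z| ≤ (1 - a)|z|(1 + |z|)/(1 - a|z|)`.
Apply this at `w = ω_{t₀,t₁}(z)`; since `|w| ≤ |z|` and the bound is increasing in `|z|`, done.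
-/

open Metric Set ComplexConjugate

theorem norm_sub_le_norm_one_sub_conj_mul {a u : ℂ} (ha : ‖a‖ ≤ 1) (hu : ‖u‖ ≤ 1) :
    ‖u - a‖ ≤ ‖1 - conj a * u‖ := by
  have hgap : ‖1 - conj a * u‖ ^ 2 - ‖u - a‖ ^ 2 = (1 - ‖a‖ ^ 2) * (1 - ‖u‖ ^ 2) := by
    simp only [Complex.sq_norm, Complex.normSq_apply, Complex.sub_re, Complex.sub_im,
      Complex.mul_re, Complex.mul_im, Complex.one_re, Complex.one_im, Complex.conj_re,
      Complex.conj_im]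
    ring
  have : 0 ≤ (1 - ‖a‖ ^ 2) * (1 - ‖u‖ ^ 2) :=
    mul_nonneg (by nlinarith [norm_nonneg a]) (by nlinarith [norm_nonneg u])
  exact pow_le_pow_iff_left₀ (norm_nonneg _) (norm_nonneg _) two_ne_zero |>.1 (by linarith)

theorem norm_sub_apply_zero_le_mul_norm_one_sub_conj_mul {g : ℂ → ℂ}
    (hd : DifferentiableOn ℂ g (ball 0 1)) (hg : MapsTo g (ball 0 1) (closedBall 0 1))
    {z : ℂ} (hz : z ∈ ball 0 1) :
    ‖g z - g 0‖ ≤ ‖z‖ * ‖1 - conj (g 0) * g z‖ := by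
  have hg_le : ∀ w ∈ ball (0 : ℂ) 1, ‖g w‖ ≤ 1 := fun w hw => mem_closedBall_zero_iff.1 (hg hw)
  have h0 : (0 : ℂ) ∈ ball (0 : ℂ) 1 := mem_ball_self one_pos
  rcases (hg_le 0 h0).eq_or_lt with hmax | hlt
  · -- `‖g‖` attains its maximum at `0`, so `g` is constant
    have hconst := Complex.eqOn_of_isPreconnected_of_isMaxOn_norm (convex_ball _ _).isPreconnected
      isOpen_ball hd h0 (fun w hw => by simpa [hmax] using hg_le w hw) hz
    simp only [Function.const_apply] at hconst
    rw [hconst, sub_self, norm_zero]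
    positivity
  · have hden : ∀ w ∈ ball (0 : ℂ) 1, 1 - conj (g 0) * g w ≠ 0 := fun w hw => by
      refine sub_ne_zero.2 (fun h => ?_)
      have : ‖conj (g 0) * g w‖ < 1 := by
        rw [norm_mul, RCLike.norm_conj]
        exact (mul_le_of_le_one_right (norm_nonneg _) (hg_le w hw)).trans_lt hlt
      rw [← h, norm_one] at this
      exact lt_irrefl _ this
    set F : ℂ → ℂ := fun w => (g w - g 0) / (1 - conj (g 0) * g w)
    have hFd : DifferentiableOn ℂ F (ball 0 1) :=
      (hd.sub_const _).div ((differentiableOn_const _).sub ((differentiableOn_const _).mul hd)) hden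
    have hF : MapsTo F (ball 0 1) (closedBall 0 1) := fun w hw => by
      rw [mem_closedBall_zero_iff, norm_div]
      exact div_le_one_of_le₀ (norm_sub_le_norm_one_sub_conj_mul hlt.le (hg_le w hw))
        (norm_nonneg _)
    have hFz := Complex.norm_le_norm_of_mapsTo_ball hFd hF (by simp [F]) (mem_ball_zero_iff.1 hz)
    rwa [norm_div, div_le_iff₀ (norm_pos_iff.2 (hden z hz))] at hFz

theorem norm_sub_one_mul_le_of_norm_sub_le {a r : ℝ} {u : ℂ} (ha₀ : 0 ≤ a) (ha₁ : a ≤ 1)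
    (hr : 0 ≤ r) (h : ‖u - a‖ ≤ r * ‖1 - a * u‖) :
    ‖u - 1‖ * (1 - a * r) ≤ (1 - a) * (1 + r) := by
  have hden : ‖1 - a * u‖ ≤ (1 - a) + a * ‖u - 1‖ := by
    calc ‖1 - a * u‖ = ‖((1 - a : ℝ) : ℂ) + a * (1 - u)‖ := by push_cast; ring_nf
      _ ≤ ‖((1 - a : ℝ) : ℂ)‖ + ‖(a : ℂ)‖ * ‖1 - u‖ := (norm_add_le _ _).trans_eq (by rw [norm_mul])
      _ = (1 - a) + a * ‖u - 1‖ := by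
        rw [Complex.norm_real, Complex.norm_real, Real.norm_of_nonneg (by linarith),
          Real.norm_of_nonneg ha₀, norm_sub_rev]
  have hnum : ‖u - 1‖ ≤ ‖u - a‖ + (1 - a) := by
    calc ‖u - 1‖ = ‖(u - a) + ((a - 1 : ℝ) : ℂ)‖ := by push_cast; ring_nf
      _ ≤ ‖u - a‖ + ‖((a - 1 : ℝ) : ℂ)‖ := norm_add_le _ _
      _ = ‖u - a‖ + (1 - a) := by
        rw [Complex.norm_real, Real.norm_of_nonpos (by linarith), neg_sub]
  nlinarith

theorem norm_sub_self_le_of_mapsTo_ball {f : ℂ → ℂ} (hd : DifferentiableOn ℂ f (ball 0 1))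
    (hf : MapsTo f (ball 0 1) (closedBall 0 1)) (h₀ : f 0 = 0) {a : ℝ} (ha : deriv f 0 = a)
    (ha₀ : 0 ≤ a) {z : ℂ} (hz : z ∈ ball 0 1) :
    ‖f z - z‖ ≤ (1 - a) * (‖z‖ * (1 + ‖z‖)) / (1 - a * ‖z‖) := by
  set g := dslope f 0
  have hgd : DifferentiableOn ℂ g (ball 0 1) :=
    (Complex.differentiableOn_dslope (ball_mem_nhds _ one_pos)).2 hd
  have hg : MapsTo g (ball 0 1) (closedBall 0 1) := fun w hw => by
    simpa using Complex.norm_dslope_le_div_of_mapsTo_ball hd (by rwa [h₀]) hw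
  have hg₀ : g 0 = a := by rw [← ha]; exact dslope_same f 0
  have ha₁ : a ≤ 1 := by
    simpa [hg₀, Real.norm_of_nonneg ha₀] using hg (mem_ball_self one_pos)
  have hz₁ : ‖z‖ < 1 := mem_ball_zero_iff.1 hz
  have hfz : f z - z = z * (g z - 1) := by
    calc f z - z = (z - 0) • g z - z := by rw [sub_smul_dslope, h₀, sub_zero]
      _ = z * (g z - 1) := by rw [sub_zero, smul_eq_mul]; ring
  have hpick := norm_sub_apply_zero_le_mul_norm_one_sub_conj_mul hgd hg hz
  rw [hg₀, Complex.conj_ofReal] at hpick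
  rw [hfz, norm_mul, le_div_iff₀ (by nlinarith [norm_nonneg z]), mul_assoc]
  have := norm_sub_one_mul_le_of_norm_sub_le ha₀ ha₁ (norm_nonneg z) hpick
  nlinarith [norm_nonneg z]

theorem monotoneOn_one_sub_mul_div_one_sub_mul {a : ℝ} (ha₁ : a ≤ 1) :
    MonotoneOn (fun r => (1 - a) * (r * (1 + r)) / (1 - a * r)) (Ico 0 1) := by
  rintro r ⟨hr₀, hr₁⟩ s ⟨hs₀, hs₁⟩ hrs
  have : a * r * s ≤ 1 := by nlinarith [mul_nonneg hr₀ hs₀]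
  rw [div_le_div_iff₀ (by nlinarith) (by nlinarith)]
  nlinarith [mul_nonneg (sub_nonneg.2 ha₁) (mul_nonneg (sub_nonneg.2 hrs)
    (by nlinarith : 0 ≤ 1 + r + s - a * r * s))]

theorem transition_family_lipschitz_general (I : Set ℝ)
    (ω : ℝ → ℝ → ℂ → ℂ)
    (hdiff : ∀ s ∈ I, ∀ t ∈ I, s ≤ t → DifferentiableOn ℂ (ω s t) (ball 0 1))
    (hmaps : ∀ s ∈ I, ∀ t ∈ I, s ≤ t → MapsTo (ω s t) (ball 0 1) (ball 0 1))
    (h0 : ∀ s ∈ I, ∀ t ∈ I, s ≤ t → ω s t 0 = 0)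
    (hderiv : ∀ s ∈ I, ∀ t ∈ I, s ≤ t →
      (deriv (ω s t) 0).im = 0 ∧ 0 < (deriv (ω s t) 0).re)
    (hcomp : ∀ t₀ ∈ I, ∀ t₁ ∈ I, ∀ t₂ ∈ I, t₀ ≤ t₁ → t₁ ≤ t₂ →
      ∀ z ∈ ball (0 : ℂ) 1, ω t₁ t₂ (ω t₀ t₁ z) = ω t₀ t₂ z) :
    ∀ t₀ ∈ I, ∀ t₁ ∈ I, ∀ t₂ ∈ I, t₀ < t₁ → t₁ < t₂ → ∀ z ∈ ball (0 : ℂ) 1,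
      ‖ω t₀ t₂ z - ω t₀ t₁ z‖ ≤
        (1 - (deriv (ω t₁ t₂) 0).re) * (‖z‖ * (1 + ‖z‖)) /
          (1 - (deriv (ω t₁ t₂) 0).re * ‖z‖) := by
  intro t₀ ht₀ t₁ ht₁ t₂ ht₂ h01 h12 z hz
  have hmaps₀₁ := hmaps t₀ ht₀ t₁ ht₁ h01.le
  have hmaps₁₂ := (hmaps t₁ ht₁ t₂ ht₂ h12.le).mono_right ball_subset_closedBall
  have hw : ω t₀ t₁ z ∈ ball (0 : ℂ) 1 := hmaps₀₁ hz
  have hwz : ‖ω t₀ t₁ z‖ ≤ ‖z‖ :=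
    Complex.norm_le_norm_of_mapsTo_ball (hdiff t₀ ht₀ t₁ ht₁ h01.le)
      (hmaps₀₁.mono_right ball_subset_closedBall) (h0 t₀ ht₀ t₁ ht₁ h01.le) (mem_ball_zero_iff.1 hz)
  obtain ⟨him, hre⟩ := hderiv t₁ ht₁ t₂ ht₂ h12.le
  have ha₁ : (deriv (ω t₁ t₂) 0).re ≤ 1 := (Complex.re_le_norm _).trans
    (Complex.norm_deriv_le_one_of_mapsTo_ball (hdiff t₁ ht₁ t₂ ht₂ h12.le)
      (by rwa [h0 t₁ ht₁ t₂ ht₂ h12.le]) one_pos)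
  rw [← hcomp t₀ ht₀ t₁ ht₁ t₂ ht₂ h01.le h12.le z hz]
  calc _ ≤ _ := norm_sub_self_le_of_mapsTo_ball (hdiff t₁ ht₁ t₂ ht₂ h12.le) hmaps₁₂
        (h0 t₁ ht₁ t₂ ht₂ h12.le) (Complex.ext rfl him) hre.le hw
    _ ≤ _ := monotoneOn_one_sub_mul_div_one_sub_mul ha₁
        ⟨norm_nonneg _, mem_ball_zero_iff.1 hw⟩ ⟨norm_nonneg z, mem_ball_zero_iff.1 hz⟩ hwz

/-- Lipschitz-type estimate for a transition family `{ω_{s,t}}` on an interval `I`: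
for `t₀ < t₁ < t₂` and `z` in the unit disc,
`|ω_{t₀,t₂}(z) - ω_{t₀,t₁}(z)| ≤ (1 - a_{t₁,t₂})·|z|(1+|z|)/(1 - a_{t₁,t₂}|z|)`,
where `a_{s,t} = ω_{s,t}'(0)`. -/
theorem transition_family_lipschitz (I : Set ℝ) (hI : I.OrdConnected)
    (ω : ℝ → ℝ → ℂ → ℂ)
    (hdiff : ∀ s ∈ I, ∀ t ∈ I, s ≤ t → DifferentiableOn ℂ (ω s t) (ball 0 1))
    (hmaps : ∀ s ∈ I, ∀ t ∈ I, s ≤ t → MapsTo (ω s t) (ball 0 1) (ball 0 1))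
    (h0 : ∀ s ∈ I, ∀ t ∈ I, s ≤ t → ω s t 0 = 0)
    (hderiv : ∀ s ∈ I, ∀ t ∈ I, s ≤ t →
      (deriv (ω s t) 0).im = 0 ∧ 0 < (deriv (ω s t) 0).re)
    (hid : ∀ t ∈ I, ∀ z ∈ ball (0 : ℂ) 1, ω t t z = z)
    (hcomp : ∀ t₀ ∈ I, ∀ t₁ ∈ I, ∀ t₂ ∈ I, t₀ ≤ t₁ → t₁ ≤ t₂ →
      ∀ z ∈ ball (0 : ℂ) 1, ω t₁ t₂ (ω t₀ t₁ z) = ω t₀ t₂ z) :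
    ∀ t₀ ∈ I, ∀ t₁ ∈ I, ∀ t₂ ∈ I, t₀ < t₁ → t₁ < t₂ → ∀ z ∈ ball (0 : ℂ) 1,
      ‖ω t₀ t₂ z - ω t₀ t₁ z‖ ≤
        (1 - (deriv (ω t₁ t₂) 0).re) * (‖z‖ * (1 + ‖z‖)) /
          (1 - (deriv (ω t₁ t₂) 0).re * ‖z‖) :=
  transition_family_lipschitz_general I ω hdiff hmaps h0 hderiv hcomp
end

section
/- Let {ω_{s,t}} be a transition family on an interval I such that the map (s,t) ↦ ω_{s,t} is continuous in the topology of locally uniform convergence on 𝔻 (equivalently, a_{s,t} = ω_{s,t}'(0) is continuous). Then ω_{s,t} is injective on 𝔻 for every s ≤ t in I. -/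
/-!
A holomorphic self-map `f` of the unit disc fixing `0` with `Re f'(0)` close to `1` is injective
on `closedBall 0 r`: Borel–Carathéodory applied to `f(z)/z - f'(0)`, followed by the Cauchy
estimate, keeps `f'` within `8 (1 - Re f'(0)) / (1 - r)²` of `f'(0)` on that ball. As
`ω_{τ,τ} = id`, continuity of `Re ω_{u,u'}'(0)` makes this apply to every `ω_{u,u'}` with
`u ≤ τ ≤ u'` close to `τ`. If `ω_{s,t}` identified `z₁ ≠ z₂`, let `τ` be the infimum of the times
`u` at which `ω_{s,u}` does, and pick such `u ≤ τ ≤ u'` with `ω_{s,u} z₁ ≠ ω_{s,u} z₂` and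
`ω_{s,u'} z₁ = ω_{s,u'} z₂`: then `ω_{u,u'}` identifies two distinct points which, by Schwarz's
lemma, lie in `closedBall 0 (max ‖z₁‖ ‖z₂‖)`.
-/

open Metric Set Filter Topology

namespace Complex

variable {f : ℂ → ℂ}

theorem re_deriv_le_one (hd : DifferentiableOn ℂ f (ball 0 1))
    (hm : MapsTo f (ball 0 1) (ball 0 1)) (h0 : f 0 = 0) : (deriv f 0).re ≤ 1 :=
  (re_le_norm _).trans <| norm_deriv_le_one_of_mapsTo_ball hd
    (by rw [h0]; exact hm.mono_right ball_subset_closedBall) one_pos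

theorem norm_dslope_sub_deriv_le (hd : DifferentiableOn ℂ f (ball 0 1))
    (hm : MapsTo f (ball 0 1) (ball 0 1)) (h0 : f 0 = 0) {z : ℂ} (hz : z ∈ ball (0 : ℂ) 1) :
    ‖dslope f 0 z - deriv f 0‖ ≤ 2 * (1 - (deriv f 0).re) * ‖z‖ / (1 - ‖z‖) := by
  have hdslope : DifferentiableOn ℂ (dslope f 0) (ball 0 1) :=
    (differentiableOn_dslope (ball_mem_nhds _ one_pos)).mpr hd
  have hle : ∀ w ∈ ball (0 : ℂ) 1, ‖dslope f 0 w‖ ≤ 1 := fun w hw => by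
    simpa using norm_dslope_le_div_of_mapsTo_ball hd
      (by rw [h0]; exact hm.mono_right ball_subset_closedBall) hw
  have hre := re_deriv_le_one hd hm h0
  -- Borel–Carathéodory needs `0 < M`, so let `M` decrease to `1 - Re f'(0)`.
  have hbound : ∀ M > 1 - (deriv f 0).re,
      ‖dslope f 0 z - deriv f 0‖ ≤ 2 * M * ‖z‖ / (1 - ‖z‖) := fun M hM =>
    borelCaratheodory_zero (f := fun w => dslope f 0 w - deriv f 0) (by linarith)
      (hdslope.sub_const _)
      (fun w hw => by
        have := (re_le_norm _).trans (hle w hw)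
        simp only [mem_ofPred_eq, sub_re]
        linarith)
      one_pos hz (by simp)
  have hcont : Continuous fun M : ℝ => 2 * M * ‖z‖ / (1 - ‖z‖) := by fun_prop
  exact ge_of_tendsto ((hcont.tendsto _).mono_left nhdsWithin_le_nhds)
    (eventually_nhdsWithin_of_forall (s := Ioi _) hbound)

theorem norm_sub_deriv_mul_le (hd : DifferentiableOn ℂ f (ball 0 1))
    (hm : MapsTo f (ball 0 1) (ball 0 1)) (h0 : f 0 = 0) {z : ℂ} (hz : z ∈ ball (0 : ℂ) 1) :
    ‖f z - deriv f 0 * z‖ ≤ 2 * (1 - (deriv f 0).re) * ‖z‖ ^ 2 / (1 - ‖z‖) := by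
  have hf : f z = z * dslope f 0 z := by simpa [h0] using (sub_smul_dslope f 0 z).symm
  calc ‖f z - deriv f 0 * z‖ = ‖z‖ * ‖dslope f 0 z - deriv f 0‖ := by
        rw [hf, ← norm_mul]; ring_nf
    _ ≤ ‖z‖ * (2 * (1 - (deriv f 0).re) * ‖z‖ / (1 - ‖z‖)) :=
        mul_le_mul_of_nonneg_left (norm_dslope_sub_deriv_le hd hm h0 hz) (norm_nonneg z)
    _ = 2 * (1 - (deriv f 0).re) * ‖z‖ ^ 2 / (1 - ‖z‖) := by ring

theorem deriv_sub_mul_id {z : ℂ} (hf : DifferentiableAt ℂ f z) (c : ℂ) :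
    deriv (fun w => f w - c * w) z = deriv f z - c := by
  have := (hf.hasDerivAt.sub ((hasDerivAt_id' z).const_mul c)).deriv
  rwa [mul_one] at this

theorem norm_deriv_sub_deriv_le (hd : DifferentiableOn ℂ f (ball 0 1))
    (hm : MapsTo f (ball 0 1) (ball 0 1)) (h0 : f 0 = 0) {r : ℝ} (hr : r < 1) {w : ℂ}
    (hw : ‖w‖ ≤ r) :
    ‖deriv f w - deriv f 0‖ ≤ 8 * (1 - (deriv f 0).re) / (1 - r) ^ 2 := by
  set c := deriv f 0
  have hR : 0 < (1 - r) / 2 := by linarith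
  have hnorm : ∀ z ∈ closedBall w ((1 - r) / 2), ‖z‖ ≤ (1 + r) / 2 := fun z hz => by
    have := norm_le_norm_add_norm_sub' z w
    rw [mem_closedBall, dist_eq_norm] at hz
    linarith
  have hsub : closedBall w ((1 - r) / 2) ⊆ ball 0 1 := fun z hz => by
    rw [mem_ball_zero_iff]; linarith [hnorm z hz]
  have hdg : DifferentiableOn ℂ (fun z => f z - c * z) (ball 0 1) :=
    hd.sub (differentiableOn_id.const_mul c)
  have hsphere : ∀ z ∈ sphere w ((1 - r) / 2), ‖f z - c * z‖ ≤ 4 * (1 - c.re) / (1 - r) :=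
    fun z hz => by
      have hz' := hnorm z (sphere_subset_closedBall hz)
      have hz1 : ‖z‖ < 1 := by linarith
      calc ‖f z - c * z‖ ≤ 2 * (1 - c.re) * ‖z‖ ^ 2 / (1 - ‖z‖) :=
            norm_sub_deriv_mul_le hd hm h0 (mem_ball_zero_iff.mpr hz1)
        _ ≤ 2 * (1 - c.re) * 1 / (1 - (1 + r) / 2) := by
            have := re_deriv_le_one hd hm h0
            gcongr
            · linarith
            · nlinarith [norm_nonneg z]
        _ = 4 * (1 - c.re) / (1 - r) := by field_simp; ring
  have hfw := hd.differentiableAt (isOpen_ball.mem_nhds (hsub (mem_closedBall_self hR.le)))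
  calc ‖deriv f w - c‖ = ‖deriv (fun z => f z - c * z) w‖ := by rw [deriv_sub_mul_id hfw]
    _ ≤ 4 * (1 - c.re) / (1 - r) / ((1 - r) / 2) :=
        norm_deriv_le_of_forall_mem_sphere_norm_le hR (hdg.diffContOnCl_ball hsub) hsphere
    _ = 8 * (1 - c.re) / (1 - r) ^ 2 := by field_simp; ring

theorem injOn_closedBall_of_mapsTo_ball (hd : DifferentiableOn ℂ f (ball 0 1))
    (hm : MapsTo f (ball 0 1) (ball 0 1)) (h0 : f 0 = 0) {r : ℝ} (hr : r < 1)
    (hc : 8 * (1 - (deriv f 0).re) < (1 - r) ^ 2 * (deriv f 0).re) :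
    InjOn f (closedBall 0 r) := by
  set c := deriv f 0
  set L := 8 * (1 - c.re) / (1 - r) ^ 2
  have hL : L < ‖c‖ :=
    (div_lt_iff₀' (by nlinarith)).mpr hc |>.trans_le (re_le_norm c)
  have hsub : closedBall (0 : ℂ) r ⊆ ball 0 1 := closedBall_subset_ball hr
  intro w₁ hw₁ w₂ hw₂ heq
  have hlip : ‖(f w₁ - c * w₁) - (f w₂ - c * w₂)‖ ≤ L * ‖w₁ - w₂‖ := by
    refine (convex_closedBall 0 r).norm_image_sub_le_of_norm_deriv_le
      (f := fun z => f z - c * z) (fun z hz => ?_) (fun z hz => ?_) hw₂ hw₁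
    · exact (hd.differentiableAt (isOpen_ball.mem_nhds (hsub hz))).sub
        (differentiableAt_id.const_mul c)
    · rw [deriv_sub_mul_id (hd.differentiableAt (isOpen_ball.mem_nhds (hsub hz)))]
      exact norm_deriv_sub_deriv_le hd hm h0 hr (mem_closedBall_zero_iff.mp hz)
  rw [heq, sub_sub_sub_cancel_left, ← mul_sub, norm_mul, norm_sub_rev w₂] at hlip
  by_contra hne
  exact (mul_le_mul_iff_left₀ (norm_pos_iff.mpr (sub_ne_zero.mpr hne))).mp hlip |>.not_gt hL

end Complex

theorem mem_of_locally_propagating {G : Set ℝ} {s t : ℝ} (hst : s ≤ t) (hs : s ∈ G)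
    (h : ∀ τ ∈ Icc s t, ∀ᶠ p : ℝ × ℝ in 𝓝 (τ, τ),
      p.1 ∈ Icc s τ → p.2 ∈ Icc τ t → p.1 ∈ G → p.2 ∈ G) :
    t ∈ G := by
  by_contra ht
  set B := Icc s t \ G
  have htB : t ∈ B := ⟨⟨hst, le_rfl⟩, ht⟩
  have hbdd : BddBelow B := ⟨s, fun u hu => hu.1.1⟩
  set τ := sInf B
  have hτ : τ ∈ Icc s t := ⟨le_csInf ⟨t, htB⟩ fun u hu => hu.1.1, csInf_le hbdd htB⟩
  obtain ⟨δ, hδ, hnear⟩ := Metric.eventually_nhds_iff.mp (h τ hτ)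
  obtain ⟨u', hu'B, hu'δ⟩ := exists_lt_of_csInf_lt ⟨t, htB⟩ (lt_add_of_pos_right τ hδ)
  set u := max s (τ - δ / 2)
  have hu : u ∈ Icc s τ := ⟨le_max_left _ _, max_le hτ.1 (by linarith)⟩
  -- `u` lies strictly to the left of `τ = inf B`, unless it is `s`
  have huG : u ∈ G := by
    by_contra huG
    have hτu : τ ≤ u := csInf_le hbdd ⟨⟨hu.1, hu.2.trans hτ.2⟩, huG⟩
    rcases max_choice s (τ - δ / 2) with hus | hus
    · exact huG (by change max s (τ - δ / 2) ∈ G; rwa [hus])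
    · linarith
  have hdist : dist (u, u') (τ, τ) < δ := by
    rw [Prod.dist_eq, Real.dist_eq, Real.dist_eq, max_lt_iff, abs_lt, abs_lt]
    have := le_max_right s (τ - δ / 2)
    have := hu.2
    have := csInf_le hbdd hu'B
    dsimp only
    refine ⟨⟨?_, ?_⟩, ?_, ?_⟩ <;> linarith
  exact hu'B.2 (hnear hdist hu ⟨csInf_le hbdd hu'B, hu'B.1.2⟩ huG)

structure IsTransitionFamily (I : Set ℝ) (ω : ℝ → ℝ → ℂ → ℂ) : Prop where
  differentiableOn : ∀ s ∈ I, ∀ t ∈ I, s ≤ t → DifferentiableOn ℂ (ω s t) (ball 0 1)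
  mapsTo : ∀ s ∈ I, ∀ t ∈ I, s ≤ t → MapsTo (ω s t) (ball 0 1) (ball 0 1)
  map_zero : ∀ s ∈ I, ∀ t ∈ I, s ≤ t → ω s t 0 = 0
  self_apply : ∀ t ∈ I, ∀ z ∈ ball (0 : ℂ) 1, ω t t z = z
  comp_apply : ∀ t₀ ∈ I, ∀ t₁ ∈ I, ∀ t₂ ∈ I, t₀ ≤ t₁ → t₁ ≤ t₂ →
    ∀ z ∈ ball (0 : ℂ) 1, ω t₁ t₂ (ω t₀ t₁ z) = ω t₀ t₂ z

namespace IsTransitionFamily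

variable {I : Set ℝ} {ω : ℝ → ℝ → ℂ → ℂ} (hω : IsTransitionFamily I ω)
include hω

theorem norm_apply_le {s t : ℝ} (hs : s ∈ I) (ht : t ∈ I) (hst : s ≤ t) {z : ℂ}
    (hz : z ∈ ball (0 : ℂ) 1) : ‖ω s t z‖ ≤ ‖z‖ :=
  Complex.norm_le_norm_of_mapsTo_ball (hω.differentiableOn s hs t ht hst)
    ((hω.mapsTo s hs t ht hst).mono_right ball_subset_closedBall) (hω.map_zero s hs t ht hst)
    (mem_ball_zero_iff.mp hz)

theorem deriv_self {t : ℝ} (ht : t ∈ I) : deriv (ω t t) 0 = 1 := by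
  have : ω t t =ᶠ[𝓝 0] id :=
    eventually_of_mem (ball_mem_nhds 0 one_pos) (hω.self_apply t ht)
  rw [this.deriv_eq, deriv_id]

theorem eventually_injOn_closedBall
    (hcont : ContinuousOn (fun p : ℝ × ℝ => (deriv (ω p.1 p.2) 0).re)
      {p : ℝ × ℝ | p.1 ∈ I ∧ p.2 ∈ I ∧ p.1 ≤ p.2})
    {τ : ℝ} (hτ : τ ∈ I) {r : ℝ} (hr : r < 1) :
    ∀ᶠ p in 𝓝[{p : ℝ × ℝ | p.1 ∈ I ∧ p.2 ∈ I ∧ p.1 ≤ p.2}] (τ, τ),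
      InjOn (ω p.1 p.2) (closedBall 0 r) := by
  have hlim := (hcont (τ, τ) ⟨hτ, hτ, le_rfl⟩).tendsto
  simp only [hω.deriv_self hτ, Complex.one_re] at hlim
  have hsmall := ((tendsto_const_nhds (x := (8 : ℝ))).mul (tendsto_const_nhds.sub hlim)).sub
    ((tendsto_const_nhds (x := (1 - r) ^ 2)).mul hlim) |>.eventually_lt_const
    (show 8 * (1 - 1) - (1 - r) ^ 2 * 1 < (0 : ℝ) by nlinarith)
  filter_upwards [hsmall, self_mem_nhdsWithin] with p hp ⟨hp₁, hp₂, hp₁₂⟩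
  exact Complex.injOn_closedBall_of_mapsTo_ball (hω.differentiableOn _ hp₁ _ hp₂ hp₁₂)
    (hω.mapsTo _ hp₁ _ hp₂ hp₁₂) (hω.map_zero _ hp₁ _ hp₂ hp₁₂) hr (by linarith)

end IsTransitionFamily

theorem transition_family_univalent_general (I : Set ℝ) (hI : I.OrdConnected)
    (ω : ℝ → ℝ → ℂ → ℂ)
    (hdiff : ∀ s ∈ I, ∀ t ∈ I, s ≤ t → DifferentiableOn ℂ (ω s t) (ball 0 1))
    (hmaps : ∀ s ∈ I, ∀ t ∈ I, s ≤ t → MapsTo (ω s t) (ball 0 1) (ball 0 1))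
    (h0 : ∀ s ∈ I, ∀ t ∈ I, s ≤ t → ω s t 0 = 0)
    (hid : ∀ t ∈ I, ∀ z ∈ ball (0 : ℂ) 1, ω t t z = z)
    (hcomp : ∀ t₀ ∈ I, ∀ t₁ ∈ I, ∀ t₂ ∈ I, t₀ ≤ t₁ → t₁ ≤ t₂ →
      ∀ z ∈ ball (0 : ℂ) 1, ω t₁ t₂ (ω t₀ t₁ z) = ω t₀ t₂ z)
    (hcont : ContinuousOn (fun p : ℝ × ℝ => (deriv (ω p.1 p.2) 0).re)
      {p : ℝ × ℝ | p.1 ∈ I ∧ p.2 ∈ I ∧ p.1 ≤ p.2}) :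
    ∀ s ∈ I, ∀ t ∈ I, s ≤ t → InjOn (ω s t) (ball (0 : ℂ) 1) := by
  have hω : IsTransitionFamily I ω := ⟨hdiff, hmaps, h0, hid, hcomp⟩
  intro s hs t ht hst z₁ hz₁ z₂ hz₂ heq
  by_contra hne
  obtain ⟨r, hr, hz₁r, hz₂r⟩ : ∃ r < 1, ‖z₁‖ ≤ r ∧ ‖z₂‖ ≤ r :=
    ⟨_, max_lt (mem_ball_zero_iff.mp hz₁) (mem_ball_zero_iff.mp hz₂), le_max_left _ _,
      le_max_right _ _⟩
  refine mem_of_locally_propagating (G := {u | ω s u z₁ ≠ ω s u z₂}) hst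
    (by simpa [hid s hs z₁ hz₁, hid s hs z₂ hz₂] using hne) (fun τ hτ => ?_) heq
  filter_upwards [eventually_nhdsWithin_iff.mp
    (hω.eventually_injOn_closedBall hcont (hI.out hs ht hτ) hr)] with ⟨u, u'⟩ hinj hu hu' hne'
  have huI : u ∈ I := hI.out hs ht ⟨hu.1, hu.2.trans hτ.2⟩
  have hu'I : u' ∈ I := hI.out hs ht ⟨hu.1.trans (hu.2.trans hu'.1), hu'.2⟩
  have huu' : u ≤ u' := hu.2.trans hu'.1
  have hmem : ∀ z ∈ ball (0 : ℂ) 1, ‖z‖ ≤ r → ω s u z ∈ closedBall 0 r := fun z hz hzr =>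
    mem_closedBall_zero_iff.mpr ((hω.norm_apply_le hs huI hu.1 hz).trans hzr)
  change ω s u' z₁ ≠ ω s u' z₂
  rw [← hcomp s hs u huI u' hu'I hu.1 huu' _ hz₁,
    ← hcomp s hs u huI u' hu'I hu.1 huu' _ hz₂]
  exact (hinj ⟨huI, hu'I, huu'⟩).ne (hmem z₁ hz₁ hz₁r) (hmem z₂ hz₂ hz₂r) hne'

/-- If a transition family `{ω_{s,t}}` on an interval `I` is continuous
(equivalently, `a_{s,t} = ω_{s,t}'(0)` is continuous in `(s,t)`), then each
`ω_{s,t}` is injective on the unit disc. -/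
theorem transition_family_univalent (I : Set ℝ) (hI : I.OrdConnected)
    (ω : ℝ → ℝ → ℂ → ℂ)
    (hdiff : ∀ s ∈ I, ∀ t ∈ I, s ≤ t → DifferentiableOn ℂ (ω s t) (ball 0 1))
    (hmaps : ∀ s ∈ I, ∀ t ∈ I, s ≤ t → MapsTo (ω s t) (ball 0 1) (ball 0 1))
    (h0 : ∀ s ∈ I, ∀ t ∈ I, s ≤ t → ω s t 0 = 0)
    (hderiv : ∀ s ∈ I, ∀ t ∈ I, s ≤ t →
      (deriv (ω s t) 0).im = 0 ∧ 0 < (deriv (ω s t) 0).re)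
    (hid : ∀ t ∈ I, ∀ z ∈ ball (0 : ℂ) 1, ω t t z = z)
    (hcomp : ∀ t₀ ∈ I, ∀ t₁ ∈ I, ∀ t₂ ∈ I, t₀ ≤ t₁ → t₁ ≤ t₂ →
      ∀ z ∈ ball (0 : ℂ) 1, ω t₁ t₂ (ω t₀ t₁ z) = ω t₀ t₂ z)
    (hcont : ContinuousOn (fun p : ℝ × ℝ => (deriv (ω p.1 p.2) 0).re)
      {p : ℝ × ℝ | p.1 ∈ I ∧ p.2 ∈ I ∧ p.1 ≤ p.2}) :
    ∀ s ∈ I, ∀ t ∈ I, s ≤ t → InjOn (ω s t) (ball (0 : ℂ) 1) :=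
  transition_family_univalent_general I hI ω hdiff hmaps h0 hid hcomp hcont
end

section
/- Let {f_t}_{t∈I} be a Loewner chain (f_t : 𝔻 → ℂ analytic, f_t(0)=0, f_t'(0)>0, f_s ≺ f_t for s ≤ t) with a(t) = f_t'(0). Then the map t ↦ f_t is continuous from I to the space of analytic functions with the topology of locally uniform convergence if and only if a(t) is continuous on I. -/
open Metric Set Filter Topology

/-!
For `s ≤ t` write `f s = f t ∘ ω` with a Schwarz function `ω`; comparing derivatives at `0` gives
`ω'(0) = a s / a t`. Applying the Schwarz lemma to `p ↦ (p - l) / (1 - l p)`, `l = ω'(0)`, composed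
with `p = ω(z) / z` yields `|ω z - z| ≤ 2 (1 - l) / (1 - |z|)`. On a compact part of the disc, the
`f t` with `t ≤ t₁` are uniformly bounded by subordination to `f t₁`, hence uniformly Lipschitz by
Cauchy's estimate, so there `|f s - f t| ≲ 1 - a s / a t`, which tends to `0` as `s, t → t₀` when
`a` is continuous. Conversely, locally uniform convergence of holomorphic functions carries over to
their derivatives, in particular at `0`.
-/

lemma norm_sub_le_norm_one_sub_mul_s11 {p : ℂ} {l : ℝ} (hp : ‖p‖ ≤ 1) (hl : |l| ≤ 1) :
    ‖p - l‖ ≤ ‖1 - l * p‖ := by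
  have hp2 : p.re ^ 2 + p.im ^ 2 ≤ 1 := by
    nlinarith [Complex.sq_norm p, Complex.normSq_apply p, norm_nonneg p]
  have hl2 : l ^ 2 ≤ 1 := by nlinarith [sq_abs l, abs_nonneg l]
  rw [← sq_le_sq₀ (norm_nonneg _) (norm_nonneg _), Complex.sq_norm, Complex.sq_norm,
    Complex.normSq_apply, Complex.normSq_apply]
  simp only [Complex.sub_re, Complex.sub_im, Complex.mul_re, Complex.mul_im, Complex.ofReal_re,
    Complex.ofReal_im, Complex.one_re, Complex.one_im]
  nlinarith [mul_nonneg (sub_nonneg.2 hl2) (sub_nonneg.2 hp2)]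

structure IsSchwarzFunction (ω : ℂ → ℂ) : Prop where
  differentiableOn : DifferentiableOn ℂ ω (ball 0 1)
  mapsTo : MapsTo ω (ball 0 1) (ball 0 1)
  map_zero : ω 0 = 0

namespace IsSchwarzFunction

variable {ω : ℂ → ℂ} {z : ℂ}

lemma mapsTo_closedBall (hω : IsSchwarzFunction ω) : MapsTo ω (ball 0 1) (closedBall (ω 0) 1) := by
  rw [hω.map_zero]
  exact hω.mapsTo.mono_right ball_subset_closedBall

lemma norm_le (hω : IsSchwarzFunction ω) (hz : z ∈ ball 0 1) : ‖ω z‖ ≤ ‖z‖ :=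
  Complex.norm_le_norm_of_mapsTo_ball hω.differentiableOn
    (hω.mapsTo.mono_right ball_subset_closedBall) hω.map_zero (mem_ball_zero_iff.1 hz)

lemma mapsTo_ball {R : ℝ} (hω : IsSchwarzFunction ω) (hR : R ≤ 1) :
    MapsTo ω (ball 0 R) (ball 0 R) := fun z hz => by
  rw [mem_ball_zero_iff] at hz ⊢
  exact (hω.norm_le (ball_subset_ball hR (mem_ball_zero_iff.2 hz))).trans_lt hz

lemma norm_dslope_le (hω : IsSchwarzFunction ω) (hz : z ∈ ball 0 1) : ‖dslope ω 0 z‖ ≤ 1 := by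
  simpa using Complex.norm_dslope_le_div_of_mapsTo_ball hω.differentiableOn hω.mapsTo_closedBall hz

lemma deriv_comp_eq_mul {g h : ℂ → ℂ} (hω : IsSchwarzFunction ω)
    (hg : DifferentiableOn ℂ g (ball 0 1)) (heq : EqOn h (g ∘ ω) (ball 0 1)) :
    deriv h 0 = deriv g 0 * deriv ω 0 := by
  have h0 : ball (0 : ℂ) 1 ∈ 𝓝 0 := ball_mem_nhds 0 one_pos
  rw [(Filter.eventuallyEq_of_mem h0 heq).deriv_eq, deriv_comp, hω.map_zero]
  · rw [hω.map_zero]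
    exact hg.differentiableAt h0
  · exact hω.differentiableOn.differentiableAt h0

lemma eqOn_id_of_deriv_eq_one (hω : IsSchwarzFunction ω) (h : deriv ω 0 = 1) :
    EqOn ω id (ball 0 1) := fun z hz => by
  have := Complex.affine_of_mapsTo_ball_of_norm_dslope_eq_div hω.differentiableOn
    hω.mapsTo_closedBall (mem_ball_self one_pos) (by simp [h]) hz
  simpa [hω.map_zero, h] using this

lemma norm_dslope_sub_le (hω : IsSchwarzFunction ω) {l : ℝ} (hl : deriv ω 0 = l) (hl1 : |l| < 1)
    (hz : z ∈ ball 0 1) : ‖dslope ω 0 z - l‖ ≤ ‖z‖ * ‖1 - l * dslope ω 0 z‖ := by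
  set p := dslope ω 0
  have hden : ∀ w ∈ ball (0 : ℂ) 1, 1 - l * p w ≠ 0 := fun w hw h => by
    have hlp : ‖(l : ℂ) * p w‖ < 1 := by
      rw [norm_mul, Complex.norm_real, Real.norm_eq_abs]
      nlinarith [hω.norm_dslope_le hw, abs_nonneg l, norm_nonneg (p w)]
    rw [← sub_eq_zero.1 h, norm_one] at hlp
    exact hlp.false
  set q := fun w => (p w - l) / (1 - l * p w)
  have hq : DifferentiableOn ℂ q (ball 0 1) := by
    have hp : DifferentiableOn ℂ p (ball 0 1) :=
      (Complex.differentiableOn_dslope (ball_mem_nhds 0 one_pos)).2 hω.differentiableOn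
    exact (hp.sub_const _).div ((hp.const_mul _).const_sub 1) hden
  have hq_maps : MapsTo q (ball 0 1) (closedBall 0 1) := fun w hw => by
    rw [mem_closedBall_zero_iff, norm_div, div_le_one (norm_pos_iff.2 (hden w hw))]
    exact norm_sub_le_norm_one_sub_mul_s11 (hω.norm_dslope_le hw) hl1.le
  have hq0 : q 0 = 0 := by simp [q, p, hl]
  calc ‖p z - l‖ = ‖q z‖ * ‖1 - l * p z‖ := by rw [← norm_mul, div_mul_cancel₀ _ (hden z hz)]
    _ ≤ ‖z‖ * ‖1 - l * p z‖ := by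
      gcongr
      exact Complex.norm_le_norm_of_mapsTo_ball hq hq_maps hq0 (mem_ball_zero_iff.1 hz)

lemma norm_sub_self_le (hω : IsSchwarzFunction ω) {l : ℝ} (hl : deriv ω 0 = l) (hl0 : 0 ≤ l)
    {r : ℝ} (hr : r < 1) (hz : ‖z‖ ≤ r) : ‖ω z - z‖ ≤ 2 / (1 - r) * (1 - l) := by
  have hz1 : z ∈ ball (0 : ℂ) 1 := mem_ball_zero_iff.2 (hz.trans_lt hr)
  have hl1 : l ≤ 1 := by
    simpa [hl, abs_of_nonneg hl0] using hω.norm_dslope_le (mem_ball_self one_pos)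
  rcases hl1.eq_or_lt with rfl | hl1
  · simp [hω.eqOn_id_of_deriv_eq_one (by simpa using hl) hz1]
  have hωz : ω z - z = z * (dslope ω 0 z - 1) := by
    rcases eq_or_ne z 0 with rfl | hz0
    · simp [hω.map_zero]
    · rw [dslope_of_ne _ hz0, slope_def_field, hω.map_zero]
      field_simp
      ring
  set p := dslope ω 0 z
  have h1l : ‖(1 : ℂ) - l‖ = 1 - l := by
    rw [← Complex.ofReal_one, ← Complex.ofReal_sub, Complex.norm_real, Real.norm_of_nonneg]
    linarith
  have hpl := hω.norm_dslope_sub_le hl (abs_lt.2 ⟨by linarith, hl1⟩) hz1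
  have e1 : ‖1 - p‖ ≤ (1 - l) + ‖p - l‖ := by
    simpa [h1l, norm_sub_rev (l : ℂ)] using norm_sub_le_norm_sub_add_norm_sub (1 : ℂ) l p
  have e2 : ‖1 - l * p‖ ≤ ‖1 - p‖ + (1 - l) := by
    calc ‖1 - l * p‖ = ‖(1 - p) + (1 - l) * p‖ := by ring_nf
      _ ≤ ‖1 - p‖ + ‖(1 : ℂ) - l‖ * ‖p‖ := (norm_add_le _ _).trans_eq (by rw [norm_mul])
      _ ≤ ‖1 - p‖ + (1 - l) := by
        rw [h1l]
        nlinarith [hω.norm_dslope_le hz1, norm_nonneg p]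
  -- `‖1 - p‖ ≤ (1 - l) + ‖z‖ * (‖1 - p‖ + (1 - l))` by `e1`, `hpl` and `e2`
  have key : ‖1 - p‖ * (1 - ‖z‖) ≤ 2 * (1 - l) := by
    nlinarith [norm_nonneg z, mul_le_mul_of_nonneg_left e2 (norm_nonneg z),
      mem_ball_zero_iff.1 hz1]
  calc ‖ω z - z‖ = ‖z‖ * ‖1 - p‖ := by rw [hωz, norm_mul, norm_sub_rev]
    _ ≤ ‖1 - p‖ := mul_le_of_le_one_left (norm_nonneg _) (mem_ball_zero_iff.1 hz1).le
    _ ≤ 2 / (1 - r) * (1 - l) := by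
      rw [div_mul_eq_mul_div, le_div_iff₀ (by linarith)]
      nlinarith [norm_nonneg (1 - p)]

end IsSchwarzFunction

lemma dist_le_div_mul_dist_of_norm_le {E F : Type*} [NormedAddCommGroup E] [NormedSpace ℂ E]
    [NormedAddCommGroup F] [NormedSpace ℂ F] {g : E → F} {c z w : E} {r R M : ℝ}
    (hg : DifferentiableOn ℂ g (ball c R)) (hM : ∀ x ∈ ball c R, ‖g x‖ ≤ M) (hrR : r < R)
    (hz : z ∈ closedBall c r) (hw : w ∈ closedBall c r) :
    dist (g w) (g z) ≤ 2 * M / (R - r) * dist w z := by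
  have hzR : z ∈ ball c R := closedBall_subset_ball hrR hz
  by_cases hwz : dist w z < R - r
  · have hsub : ball z (R - r) ⊆ ball c R :=
      ball_subset_ball' (by linarith [mem_closedBall.1 hz])
    refine Complex.dist_le_div_mul_dist_of_mapsTo_ball (hg.mono hsub) (fun x hx => ?_) hwz
    rw [mem_closedBall, dist_eq_norm]
    linarith [norm_sub_le (g x) (g z), hM x (hsub hx), hM z hzR]
  · have hM0 : 0 ≤ M := (norm_nonneg _).trans (hM z hzR)
    calc dist (g w) (g z) ≤ ‖g w‖ + ‖g z‖ := dist_le_norm_add_norm _ _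
      _ ≤ 2 * M := by linarith [hM w (closedBall_subset_ball hrR hw), hM z hzR]
      _ ≤ 2 * M / (R - r) * dist w z := by
        rw [div_mul_eq_mul_div, le_div_iff₀ (sub_pos.2 hrR)]
        gcongr
        linarith

lemma IsSchwarzFunction.dist_comp_le {E : Type*} [NormedAddCommGroup E] [NormedSpace ℂ E]
    {ω : ℂ → ℂ} {g : ℂ → E} {z : ℂ} {l r R M : ℝ} (hω : IsSchwarzFunction ω)
    (hl : deriv ω 0 = l) (hl0 : 0 ≤ l) (hg : DifferentiableOn ℂ g (ball 0 R))
    (hM : ∀ w ∈ ball 0 R, ‖g w‖ ≤ M) (hrR : r < R) (hR : R ≤ 1) (hz : ‖z‖ ≤ r) :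
    dist (g (ω z)) (g z) ≤ 2 * M / (R - r) * (2 / (1 - r) * (1 - l)) := by
  have hz' : z ∈ closedBall 0 r := mem_closedBall_zero_iff.2 hz
  have hωz : ω z ∈ closedBall 0 r := by
    rw [mem_closedBall_zero_iff]
    exact (hω.norm_le (mem_ball_zero_iff.2 (by linarith))).trans hz
  have hM0 : 0 ≤ M := (norm_nonneg _).trans (hM z (closedBall_subset_ball hrR hz'))
  calc dist (g (ω z)) (g z) ≤ 2 * M / (R - r) * dist (ω z) z :=
        dist_le_div_mul_dist_of_norm_le hg hM hrR hz' hωz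
    _ ≤ 2 * M / (R - r) * (2 / (1 - r) * (1 - l)) := by
      rw [dist_eq_norm]
      have : 0 ≤ R - r := by linarith
      gcongr
      exact hω.norm_sub_self_le hl hl0 (by linarith) hz

lemma tendstoUniformlyOn_of_dist_le {ι α β : Type*} [PseudoMetricSpace β] {F : ι → α → β}
    {f : α → β} {p : Filter ι} {s : Set α} (b : ι → ℝ) (hb : Tendsto b p (𝓝 0))
    (h : ∀ᶠ i in p, ∀ x ∈ s, dist (f x) (F i x) ≤ b i) : TendstoUniformlyOn F f p s :=
  Metric.tendstoUniformlyOn_iff.2 fun _ hε =>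
    (h.and (hb.eventually (gt_mem_nhds hε))).mono fun _ hi x hx => (hi.1 x hx).trans_lt hi.2

lemma exists_mem_ge_Iic_mem_nhdsWithin {α : Type*} [TopologicalSpace α] [LinearOrder α]
    [ClosedIciTopology α] {I : Set α} {t₀ : α} (ht₀ : t₀ ∈ I) :
    ∃ t₁ ∈ I, t₀ ≤ t₁ ∧ Iic t₁ ∈ 𝓝[I] t₀ := by
  by_cases h : ∃ u ∈ I, t₀ < u
  · obtain ⟨u, hu, htu⟩ := h
    exact ⟨u, hu, htu.le, mem_nhdsWithin_of_mem_nhds (Iic_mem_nhds htu)⟩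
  · push Not at h
    exact ⟨t₀, ht₀, le_rfl, mem_of_superset self_mem_nhdsWithin h⟩

lemma tendsto_abs_one_sub_div_add_abs_one_sub_div {I : Set ℝ} {a : ℝ → ℝ} {t₀ : ℝ}
    (hcont : ContinuousWithinAt a I t₀) (ha : a t₀ ≠ 0) :
    Tendsto (fun t => |1 - a t / a t₀| + |1 - a t₀ / a t|) (𝓝[I] t₀) (𝓝 0) := by
  have : ContinuousWithinAt (fun t => |1 - a t / a t₀| + |1 - a t₀ / a t|) I t₀ :=
    ((hcont.div_const _).const_sub 1).abs.add
      ((continuousWithinAt_const.div hcont ha).const_sub 1).abs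
  simpa [ha] using this.tendsto

/-- Subordination `g ≺ h`. -/
def Subordinate (g h : ℂ → ℂ) : Prop :=
  ∃ ω, IsSchwarzFunction ω ∧ EqOn g (h ∘ ω) (ball 0 1)

lemma Subordinate.norm_le {g h : ℂ → ℂ} {R M : ℝ} (hgh : Subordinate g h) (hR : R ≤ 1)
    (hM : ∀ w ∈ ball 0 R, ‖h w‖ ≤ M) : ∀ w ∈ ball 0 R, ‖g w‖ ≤ M := fun w hw => by
  obtain ⟨ω, hω, heq⟩ := hgh
  rw [heq (ball_subset_ball hR hw)]
  exact hM _ (hω.mapsTo_ball hR hw)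

lemma Subordinate.dist_le {g h : ℂ → ℂ} {z : ℂ} {α β r R M : ℝ} (hgh : Subordinate g h)
    (hh : DifferentiableOn ℂ h (ball 0 1)) (hg0 : deriv g 0 = α) (hh0 : deriv h 0 = β)
    (hα : 0 ≤ α) (hβ : 0 < β) (hM : ∀ w ∈ ball 0 R, ‖h w‖ ≤ M) (hrR : r < R) (hR : R ≤ 1)
    (hz : ‖z‖ ≤ r) : dist (g z) (h z) ≤ 2 * M / (R - r) * (2 / (1 - r) * (1 - α / β)) := by
  obtain ⟨ω, hω, heq⟩ := hgh
  have hl : deriv ω 0 = ↑(α / β) := by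
    have hderiv := hω.deriv_comp_eq_mul hh heq
    rw [hg0, hh0] at hderiv
    rw [Complex.ofReal_div, hderiv, mul_div_cancel_left₀ _ (Complex.ofReal_ne_zero.2 hβ.ne')]
  rw [heq (mem_ball_zero_iff.2 (by linarith))]
  exact hω.dist_comp_le hl (div_nonneg hα hβ.le) (hh.mono (ball_subset_ball hR)) hM hrR hR hz

namespace LoewnerChain

variable {I : Set ℝ} {f : ℝ → ℂ → ℂ} {a : ℝ → ℝ}

theorem tendstoUniformlyOn_of_continuousWithinAt
    (hdiff : ∀ t ∈ I, DifferentiableOn ℂ (f t) (ball 0 1))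
    (ha : ∀ t ∈ I, deriv (f t) 0 = (a t : ℂ) ∧ 0 < a t)
    (hsub : ∀ s ∈ I, ∀ t ∈ I, s ≤ t → Subordinate (f s) (f t))
    {t₀ : ℝ} (ht₀ : t₀ ∈ I) (hcont : ContinuousWithinAt a I t₀) {K : Set ℂ}
    (hK : K ⊆ ball 0 1) (hKc : IsCompact K) : TendstoUniformlyOn f (f t₀) (𝓝[I] t₀) K := by
  obtain ⟨r, ⟨hr0, hr1⟩, hKr⟩ := exists_pos_lt_subset_ball one_pos hKc.isClosed hK
  obtain ⟨R, hrR, hR1⟩ := exists_between hr1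
  obtain ⟨t₁, ht₁, ht₀₁, hnhds⟩ := exists_mem_ge_Iic_mem_nhdsWithin ht₀
  obtain ⟨M, hM₁⟩ := (isCompact_closedBall (0 : ℂ) R).exists_bound_of_continuousOn
    ((hdiff t₁ ht₁).continuousOn.mono (closedBall_subset_ball hR1))
  have hM : ∀ t ∈ I, t ≤ t₁ → ∀ w ∈ ball (0 : ℂ) R, ‖f t w‖ ≤ M := fun t ht htt₁ =>
    (hsub t ht t₁ ht₁ htt₁).norm_le hR1.le fun w hw => hM₁ w (ball_subset_closedBall hw)
  have hM0 : 0 ≤ M := (norm_nonneg _).trans (hM t₀ ht₀ ht₀₁ 0 (mem_ball_self (hr0.trans hrR)))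
  set C := 2 * M / (R - r) * (2 / (1 - r))
  have hC : 0 ≤ C := by
    have := sub_pos.2 hrR
    have := sub_pos.2 hr1
    positivity
  have hpair : ∀ s ∈ I, ∀ t ∈ I, s ≤ t → t ≤ t₁ → ∀ z ∈ K,
      dist (f s z) (f t z) ≤ C * (1 - a s / a t) := fun s hs t ht hst htt₁ z hz => by
    rw [mul_assoc]
    exact (hsub s hs t ht hst).dist_le (hdiff t ht) (ha s hs).1 (ha t ht).1 (ha s hs).2.le
      (ha t ht).2 (hM t ht htt₁) hrR hR1.le (mem_ball_zero_iff.1 (hKr hz)).le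
  have he := (tendsto_abs_one_sub_div_add_abs_one_sub_div hcont (ha t₀ ht₀).2.ne').const_mul C
  rw [mul_zero] at he
  refine tendstoUniformlyOn_of_dist_le _ he ?_
  filter_upwards [self_mem_nhdsWithin, hnhds] with t ht htt₁ z hz
  rcases le_total t t₀ with htt₀ | htt₀
  · rw [dist_comm]
    refine (hpair t ht t₀ ht₀ htt₀ ht₀₁ z hz).trans ?_
    gcongr
    exact (le_abs_self _).trans (le_add_of_nonneg_right (abs_nonneg _))
  · refine (hpair t₀ ht₀ t ht htt₀ htt₁ z hz).trans ?_
    gcongr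
    exact (le_abs_self _).trans (le_add_of_nonneg_left (abs_nonneg _))

theorem continuousWithinAt_of_tendstoLocallyUniformlyOn
    (hdiff : ∀ t ∈ I, DifferentiableOn ℂ (f t) (ball 0 1))
    (ha : ∀ t ∈ I, deriv (f t) 0 = (a t : ℂ)) {t₀ : ℝ} (ht₀ : t₀ ∈ I)
    (h : TendstoLocallyUniformlyOn f (f t₀) (𝓝[I] t₀) (ball 0 1)) :
    ContinuousWithinAt a I t₀ := by
  have hderiv := (h.deriv (eventually_mem_nhdsWithin.mono hdiff) isOpen_ball).tendsto_at
    (mem_ball_self one_pos)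
  have hcoe : Tendsto (fun t => (a t : ℂ)) (𝓝[I] t₀) (𝓝 (a t₀)) := by
    rw [← ha t₀ ht₀]
    exact hderiv.congr' (eventually_mem_nhdsWithin.mono ha)
  exact (Complex.continuous_re.tendsto _).comp hcoe

end LoewnerChain

theorem loewner_chain_continuous_iff_general (I : Set ℝ) (f : ℝ → ℂ → ℂ) (a : ℝ → ℝ)
    (hdiff : ∀ t ∈ I, DifferentiableOn ℂ (f t) (ball 0 1))
    (ha : ∀ t ∈ I, deriv (f t) 0 = (a t : ℂ) ∧ 0 < a t)
    (hsub : ∀ s ∈ I, ∀ t ∈ I, s ≤ t → ∃ ω : ℂ → ℂ,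
      DifferentiableOn ℂ ω (ball 0 1) ∧ MapsTo ω (ball 0 1) (ball 0 1) ∧
      ω 0 = 0 ∧ ∀ z ∈ ball (0 : ℂ) 1, f s z = f t (ω z)) :
    ContinuousOn a I ↔
      ∀ t₀ ∈ I, TendstoLocallyUniformlyOn f (f t₀) (nhdsWithin t₀ I)
        (ball (0 : ℂ) 1) := by
  have hsub' : ∀ s ∈ I, ∀ t ∈ I, s ≤ t → Subordinate (f s) (f t) := fun s hs t ht hst => by
    obtain ⟨ω, hd, hm, h0, heq⟩ := hsub s hs t ht hst
    exact ⟨ω, ⟨hd, hm, h0⟩, heq⟩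
  refine ⟨fun hcont t₀ ht₀ => ?_, fun h t₀ ht₀ => ?_⟩
  · rw [tendstoLocallyUniformlyOn_iff_forall_isCompact isOpen_ball]
    exact fun K hK hKc => LoewnerChain.tendstoUniformlyOn_of_continuousWithinAt hdiff ha hsub' ht₀
      (hcont t₀ ht₀) hK hKc
  · exact LoewnerChain.continuousWithinAt_of_tendstoLocallyUniformlyOn hdiff
      (fun t ht => (ha t ht).1) ht₀ (h t₀ ht₀)

/-- A Loewner chain `{f_t}` with `a(t) = f_t'(0)` is continuous in the topology of
locally uniform convergence on the unit disc if and only if `a` is continuous. -/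
theorem loewner_chain_continuous_iff (I : Set ℝ) (f : ℝ → ℂ → ℂ) (a : ℝ → ℝ)
    (hdiff : ∀ t ∈ I, DifferentiableOn ℂ (f t) (ball 0 1))
    (h0 : ∀ t ∈ I, f t 0 = 0)
    (ha : ∀ t ∈ I, deriv (f t) 0 = (a t : ℂ) ∧ 0 < a t)
    (hsub : ∀ s ∈ I, ∀ t ∈ I, s ≤ t → ∃ ω : ℂ → ℂ,
      DifferentiableOn ℂ ω (ball 0 1) ∧ MapsTo ω (ball 0 1) (ball 0 1) ∧
      ω 0 = 0 ∧ ∀ z ∈ ball (0 : ℂ) 1, f s z = f t (ω z)) :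
    ContinuousOn a I ↔
      ∀ t₀ ∈ I, TendstoLocallyUniformlyOn f (f t₀) (nhdsWithin t₀ I)
        (ball (0 : ℂ) 1) :=
  loewner_chain_continuous_iff_general I f a hdiff ha hsub
end
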